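/- arXiv:1302.0264 — 6 statements merged into one kernel-verified Lean document; each statement's English description precedes it below -/
import Mathlib

section
/- For every sufficiently large positive integer L, setting n' = 2^L, there exists a bipartite graph whose vertex set is a disjoint union of a set S of n' senders and a set R of L·n' receivers, where R is partitioned into L classes R_1, …, R_L each of size n', every receiver in class R_i has exactly 2^i neighbors (all of them in S), and such that for every subset S' ⊆ S, the number of receivers v ∈ R with exactly one neighbor in S' is at most 20·n'. -/
/-!
Receiver `(i, j)` is joined to the dyadic block of size `2^(i+1)` containing `j`. Charge each
receiver whose block meets `S'` in a single sender `x` to `x`. On each level, the receivers charged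
to `x` form one whole dyadic block around `x`; these blocks are nested with sizes distinct powers
of two, so there are at most twice as many such receivers as elements in the largest block. For
distinct `x` these largest blocks are disjoint, because intersecting dyadic blocks are nested and
each meets `S'` only in its own sender. Hence at most `2 n'` receivers get a packet.
-/

open Finset

lemma card_filter_card_inter_eq_one {V α : Type*} [Fintype V] [DecidableEq V] [DecidableEq α]
    (N : V → Finset α) (S : Finset α) :
    #{v | #(N v ∩ S) = 1} = ∑ x ∈ S, #{v | N v ∩ S = {x}} := by
  rw [← card_biUnion]
  · congr 1
    ext v
    simp only [mem_filter, mem_univ, true_and, mem_biUnion, card_eq_one]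
    constructor
    · rintro ⟨x, hx⟩
      exact ⟨x, (mem_inter.1 (hx ▸ mem_singleton_self x)).2, hx⟩
    · rintro ⟨x, -, hx⟩
      exact ⟨x, hx⟩
  · intro x _ y _ hxy
    refine disjoint_left.2 fun v hvx hvy => hxy ?_
    simp only [mem_filter] at hvx hvy
    exact singleton_injective (hvx.2.symm.trans hvy.2)

def dyadicBlock {n : ℕ} (t : ℕ) (x : Fin n) : Finset (Fin n) :=
  {k | (k : ℕ) / 2 ^ t = x / 2 ^ t}

section DyadicBlock

variable {n : ℕ}

@[simp]
lemma mem_dyadicBlock {t : ℕ} {x k : Fin n} :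
    k ∈ dyadicBlock t x ↔ (k : ℕ) / 2 ^ t = x / 2 ^ t := by
  simp [dyadicBlock]

lemma self_mem_dyadicBlock (t : ℕ) (x : Fin n) : x ∈ dyadicBlock t x := by
  simp

lemma dyadicBlock_eq_of_mem {t : ℕ} {x k : Fin n} (h : k ∈ dyadicBlock t x) :
    dyadicBlock t k = dyadicBlock t x := by
  ext m
  simp_all

lemma dyadicBlock_mono {s t : ℕ} (h : s ≤ t) (x : Fin n) :
    dyadicBlock s x ⊆ dyadicBlock t x := by
  intro k hk
  obtain ⟨d, rfl⟩ := Nat.exists_eq_add_of_le h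
  simp_all [pow_add, ← Nat.div_div_eq_div_mul]

lemma card_dyadicBlock {t : ℕ} (h : 2 ^ t ∣ n) (x : Fin n) :
    #(dyadicBlock t x) = 2 ^ t := by
  have hpos : 0 < 2 ^ t := by positivity
  obtain ⟨c, hc⟩ := h
  have hq : ((x : ℕ) / 2 ^ t + 1) * 2 ^ t ≤ n := by
    have : (x : ℕ) / 2 ^ t < c :=
      (Nat.div_lt_iff_lt_mul hpos).2 (by rw [mul_comm, ← hc]; exact x.isLt)
    calc ((x : ℕ) / 2 ^ t + 1) * 2 ^ t ≤ c * 2 ^ t := Nat.mul_le_mul_right _ this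
      _ = n := by rw [hc, mul_comm]
  have hval : (dyadicBlock t x).map Fin.valEmbedding =
      Ico ((x : ℕ) / 2 ^ t * 2 ^ t) ((x : ℕ) / 2 ^ t * 2 ^ t + 2 ^ t) := by
    ext m
    simp only [mem_map, mem_dyadicBlock, Fin.valEmbedding_apply, mem_Ico]
    constructor
    · rintro ⟨k, hk, rfl⟩
      have := (Nat.div_eq_iff hpos).1 hk
      omega
    · intro hm
      have hmn : m < n := by rw [add_mul, one_mul] at hq; omega
      exact ⟨⟨m, hmn⟩, (Nat.div_eq_iff (x := m) hpos).2 (by omega), rfl⟩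
  rw [← card_map, hval, Nat.card_Ico]
  omega

end DyadicBlock

def dyadicNeighbors {L n : ℕ} (v : Fin L × Fin n) : Finset (Fin n) :=
  dyadicBlock ((v.1 : ℕ) + 1) v.2

def hearers (L : ℕ) {n : ℕ} (S : Finset (Fin n)) (x : Fin n) : Finset (Fin L × Fin n) :=
  {v | dyadicNeighbors v ∩ S = {x}}

section Hearers

variable {L n : ℕ} {S : Finset (Fin n)} {x : Fin n}

lemma mem_hearers {v : Fin L × Fin n} :
    v ∈ hearers L S x ↔
      dyadicBlock ((v.1 : ℕ) + 1) x ∩ S = {x} ∧ v.2 ∈ dyadicBlock ((v.1 : ℕ) + 1) x := by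
  simp only [hearers, mem_filter, mem_univ, true_and]
  unfold dyadicNeighbors
  constructor
  · intro h
    have hx : x ∈ dyadicBlock ((v.1 : ℕ) + 1) v.2 :=
      (mem_inter.1 (h ▸ mem_singleton_self x)).1
    rw [dyadicBlock_eq_of_mem hx]
    exact ⟨h, self_mem_dyadicBlock _ _⟩
  · rintro ⟨h, hv⟩
    rwa [dyadicBlock_eq_of_mem hv]

lemma eq_of_dyadicBlock_inter_eq_singleton {s t : ℕ} {k y : Fin n} (hst : s ≤ t)
    (hx : dyadicBlock s k ∩ S = {x}) (hy : dyadicBlock t k ∩ S = {y}) : x = y := by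
  have hxt : x ∈ dyadicBlock t k ∩ S :=
    inter_subset_inter_right (dyadicBlock_mono hst k) (hx ▸ mem_singleton_self x)
  rw [hy] at hxt
  exact mem_singleton.1 hxt

lemma disjoint_image_snd_hearers {y : Fin n} (hxy : x ≠ y) :
    Disjoint ((hearers L S x).image Prod.snd) ((hearers L S y).image Prod.snd) := by
  refine disjoint_left.2 ?_
  simp only [hearers, mem_image, mem_filter, mem_univ, true_and, Prod.exists, exists_eq_right]
  rintro k ⟨i, hi⟩ ⟨j, hj⟩
  rcases le_total i j with hij | hji
  · exact hxy (eq_of_dyadicBlock_inter_eq_singleton (by simpa using hij) hi hj)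
  · exact hxy (eq_of_dyadicBlock_inter_eq_singleton (by simpa using hji) hj hi).symm

lemma card_hearers_le (h : 2 ^ L ∣ n) :
    #(hearers L S x) ≤ 2 * #((hearers L S x).image Prod.snd) := by
  set H := hearers L S x
  have hdvd (i : Fin L) : 2 ^ ((i : ℕ) + 1) ∣ n := (pow_dvd_pow 2 i.isLt).trans h
  rcases (H.image Prod.fst).eq_empty_or_nonempty with hT | hT
  · simp [image_eq_empty.1 hT]
  obtain ⟨m, hmT, hmax⟩ : ∃ m ∈ H.image Prod.fst, ∀ i ∈ H.image Prod.fst, i ≤ m :=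
    ⟨_, max'_mem _ hT, fun i hi => le_max' _ i hi⟩
  have hlevel : ∀ i ∈ H.image Prod.fst, #{v ∈ H | v.1 = i} ≤ 2 ^ ((i : ℕ) + 1) := by
    intro i _
    rw [← card_dyadicBlock (hdvd i) x]
    refine card_le_card_of_injOn Prod.snd (fun v hv => ?_) (fun v hv w hw hvw => ?_)
    · obtain ⟨hvH, rfl⟩ := mem_filter.1 hv
      exact (mem_hearers.1 hvH).2
    · exact Prod.ext ((mem_filter.1 hv).2.trans (mem_filter.1 hw).2.symm) hvw
  have hgeom : ∑ i ∈ H.image Prod.fst, 2 ^ (i : ℕ) < 2 ^ ((m : ℕ) + 1) := by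
    refine (sum_map _ Fin.valEmbedding (2 ^ ·)).symm.trans_lt
      (Nat.geomSum_lt le_rfl fun k hk => ?_)
    obtain ⟨i, hi, rfl⟩ := mem_map.1 hk
    exact Nat.lt_succ_of_le (hmax i hi)
  have htop : dyadicBlock ((m : ℕ) + 1) x ⊆ H.image Prod.snd := by
    obtain ⟨v, hv, hvm⟩ := mem_image.1 hmT
    intro k hk
    refine mem_image.2 ⟨(m, k), mem_hearers.2 ⟨?_, hk⟩, rfl⟩
    rw [← hvm]
    exact (mem_hearers.1 hv).1
  calc #H = ∑ i ∈ H.image Prod.fst, #{v ∈ H | v.1 = i} := card_eq_sum_card_image _ _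
    _ ≤ ∑ i ∈ H.image Prod.fst, 2 ^ ((i : ℕ) + 1) := sum_le_sum hlevel
    _ ≤ 2 * 2 ^ ((m : ℕ) + 1) := by simp only [pow_succ, ← sum_mul]; omega
    _ = 2 * #(dyadicBlock ((m : ℕ) + 1) x) := by rw [card_dyadicBlock (hdvd m)]
    _ ≤ 2 * #(H.image Prod.snd) := Nat.mul_le_mul_left 2 (card_le_card htop)

end Hearers

theorem card_filter_card_dyadicNeighbors_inter_eq_one_le {L n : ℕ} (h : 2 ^ L ∣ n)
    (S : Finset (Fin n)) :
    #{v : Fin L × Fin n | #(dyadicNeighbors v ∩ S) = 1} ≤ 2 * n := by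
  calc #{v : Fin L × Fin n | #(dyadicNeighbors v ∩ S) = 1}
      = ∑ x ∈ S, #(hearers L S x) := card_filter_card_inter_eq_one _ S
    _ ≤ ∑ x ∈ S, 2 * #((hearers L S x).image Prod.snd) :=
        sum_le_sum fun _ _ => card_hearers_le h
    _ = 2 * #(S.biUnion fun x => (hearers L S x).image Prod.snd) := by
        rw [card_biUnion fun _ _ _ _ hxy => disjoint_image_snd_hearers hxy, mul_sum]
    _ ≤ 2 * n := Nat.mul_le_mul_left 2 ((card_le_univ _).trans_eq (Fintype.card_fin n))

/-- For every sufficiently large positive integer `L`, setting `n' = 2^L`, there exists a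
bipartite graph with sender set `Fin n'` and receiver set `Fin L × Fin n'` (class `i : Fin L`,
i.e. class `R_{i+1}`, consists of the receivers `(i, ·)` and has size `n'`), given by the
neighborhood function `N` mapping each receiver to its set of sender-neighbors, such that
every receiver in class `R_{i+1}` has exactly `2^(i+1)` neighbors, and for every subset
`S'` of the senders, the number of receivers having exactly one neighbor in `S'` is at
most `20 * n'`. -/
theorem stmt_0 :
    ∃ L₀ : ℕ, 0 < L₀ ∧ ∀ L : ℕ, L₀ ≤ L → ∀ n' : ℕ, n' = 2 ^ L →
      ∃ N : Fin L × Fin n' → Finset (Fin n'),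
        (∀ v : Fin L × Fin n', (N v).card = 2 ^ ((v.1 : ℕ) + 1)) ∧
        ∀ S' : Finset (Fin n'),
          (Finset.univ.filter
              (fun v : Fin L × Fin n' => ((N v) ∩ S').card = 1)).card ≤ 20 * n' := by
  refine ⟨1, Nat.one_pos, fun L _ n' hn' => ?_⟩
  subst hn'
  refine ⟨dyadicNeighbors, fun v => card_dyadicBlock (pow_dvd_pow 2 v.1.isLt) v.2, fun S' => ?_⟩
  have := card_filter_card_dyadicNeighbors_inter_eq_one_le dvd_rfl S'
  omega
end

section
/- Let n', s, Δ be positive integers with s ≤ n' and Δ ≤ n' − s + 1. Then P_Δ(s) = s · C(n' − s, Δ − 1) / C(n', Δ) ≤ e · (s·Δ/n') · exp(−s·Δ/n'), where e is Euler's number. -/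
/-! Since `n' * C(n' - 1, Δ - 1) = Δ * C(n', Δ)`, the probability equals
`(sΔ/n') * C(n' - s, Δ - 1) / C(n' - 1, Δ - 1)`. Comparing the binomials factor by factor bounds
the ratio by `((n' - s)/(n' - 1))^(Δ - 1) ≤ exp (-(s - 1)(Δ - 1)/(n' - 1))`, and
`(n' - s)(n' - Δ) ≥ 0` shows that this exponent is at most `1 - sΔ/n'`. -/

open Real

namespace Nat

theorem sub_mul_le_sub_mul {a b : ℕ} (hab : a ≤ b) (i : ℕ) : (a - i) * b ≤ (b - i) * a :=
  calc (a - i) * b = a * b - i * b := Nat.sub_mul ..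
    _ ≤ a * b - i * a := Nat.sub_le_sub_left (Nat.mul_le_mul_left i hab) _
    _ = (b - i) * a := by rw [Nat.sub_mul, Nat.mul_comm a b]

theorem descFactorial_mul_pow_le {a b : ℕ} (hab : a ≤ b) (k : ℕ) :
    a.descFactorial k * b ^ k ≤ b.descFactorial k * a ^ k := by
  induction k with
  | zero => simp
  | succ k ih =>
    calc a.descFactorial (k + 1) * b ^ (k + 1)
        = ((a - k) * b) * (a.descFactorial k * b ^ k) := by rw [Nat.descFactorial_succ]; ring
      _ ≤ ((b - k) * a) * (b.descFactorial k * a ^ k) :=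
        Nat.mul_le_mul (sub_mul_le_sub_mul hab k) ih
      _ = b.descFactorial (k + 1) * a ^ (k + 1) := by rw [Nat.descFactorial_succ]; ring

theorem choose_mul_pow_le {a b : ℕ} (hab : a ≤ b) (k : ℕ) :
    a.choose k * b ^ k ≤ b.choose k * a ^ k := by
  have h := descFactorial_mul_pow_le hab k
  rw [Nat.descFactorial_eq_factorial_mul_choose, Nat.descFactorial_eq_factorial_mul_choose,
    mul_assoc, mul_assoc] at h
  exact Nat.le_of_mul_le_mul_left h k.factorial_pos

end Nat

theorem cast_choose_div_choose_le_pow {a b : ℕ} (hab : a ≤ b) (k : ℕ) :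
    (a.choose k : ℝ) / b.choose k ≤ ((a : ℝ) / b) ^ k := by
  rcases (b.choose k).eq_zero_or_pos with hb | hb
  · rw [hb, Nat.cast_zero, div_zero]
    positivity
  have hbk : (0 : ℝ) < (b : ℝ) ^ k := by exact_mod_cast hb.trans_le (Nat.choose_le_pow b k)
  rw [div_pow, div_le_div_iff₀ (by exact_mod_cast hb) hbk, mul_comm ((a : ℝ) ^ k)]
  exact_mod_cast Nat.choose_mul_pow_le hab k

theorem sub_div_sub_one_le_exp (n s : ℝ) : (n - s) / (n - 1) ≤ exp (-((s - 1) / (n - 1))) := by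
  rcases eq_or_ne n 1 with rfl | hn
  · simp
  calc (n - s) / (n - 1) = -((s - 1) / (n - 1)) + 1 := by field_simp; ring
    _ ≤ _ := add_one_le_exp _

theorem mul_div_sub_one_le {n s d : ℝ} (hs : 1 ≤ s) (hsn : s ≤ n) (hdn : d ≤ n) :
    s * d / n - 1 ≤ (s - 1) * (d - 1) / (n - 1) := by
  rcases (hs.trans hsn).eq_or_lt with rfl | hn
  · obtain rfl : s = 1 := le_antisymm hsn hs
    simp only [one_mul, div_one, sub_self, zero_mul, zero_div]
    linarith
  rw [div_sub_one (by positivity), div_le_div_iff₀ (by positivity) (by linarith)]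
  nlinarith [mul_nonneg (sub_nonneg.2 hsn) (sub_nonneg.2 hdn)]

theorem cast_choose_eq_div_mul_choose_pred {n d : ℕ} (hn : 0 < n) (hd : 0 < d) :
    (n.choose d : ℝ) = n / d * (n - 1).choose (d - 1) := by
  obtain ⟨n, rfl⟩ : ∃ m, n = m + 1 := ⟨n - 1, by omega⟩
  obtain ⟨d, rfl⟩ : ∃ j, d = j + 1 := ⟨d - 1, by omega⟩
  have h : ((n + 1) * n.choose d : ℝ) = (n + 1).choose (d + 1) * (d + 1) := by
    exact_mod_cast Nat.add_one_mul_choose_eq n d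
  push_cast
  field_simp
  linarith

theorem cast_choose_div_choose_le_exp {n s d : ℕ} (hs : 0 < s) (hd : 0 < d) (hsn : s ≤ n)
    (hdn : d ≤ n - s + 1) :
    ((n - s).choose (d - 1) : ℝ) / (n - 1).choose (d - 1) ≤ exp (1 - s * d / n) := by
  have hcast (m : ℕ) (hm : m ≤ n) : ((n - m : ℕ) : ℝ) = n - m := Nat.cast_sub hm
  calc ((n - s).choose (d - 1) : ℝ) / (n - 1).choose (d - 1)
      ≤ (((n - s : ℕ) : ℝ) / (n - 1 : ℕ)) ^ (d - 1) :=
        cast_choose_div_choose_le_pow (by omega) (d - 1)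
    _ ≤ exp (-((s - 1) / ((n : ℝ) - 1))) ^ (d - 1) := by
      rw [hcast s hsn, hcast 1 (by omega), Nat.cast_one]
      have hs' : (s : ℝ) ≤ n := by exact_mod_cast hsn
      have hn' : (1 : ℝ) ≤ n := by exact_mod_cast hs.trans_le hsn
      have : (0 : ℝ) ≤ (n - s) / (n - 1) := div_nonneg (by linarith) (by linarith)
      gcongr
      exact sub_div_sub_one_le_exp _ _
    _ = exp (-((s - 1) * ((d : ℝ) - 1) / (n - 1))) := by
      rw [← exp_nat_mul, Nat.cast_sub hd, Nat.cast_one]; ring_nf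
    _ ≤ exp (1 - s * d / n) := by
      have := mul_div_sub_one_le (n := (n : ℝ)) (s := (s : ℝ)) (d := (d : ℝ))
        (by exact_mod_cast hs) (by exact_mod_cast hsn) (by norm_cast; omega)
      gcongr
      linarith

/-- For positive integers `n', s, Δ` with `s ≤ n'` and `Δ ≤ n' - s + 1`, the hypergeometric
probability `P_Δ(s) = s * C(n' - s, Δ - 1) / C(n', Δ)` is at most
`e * (s * Δ / n') * exp (- s * Δ / n')`. -/
theorem stmt_5 (n' s Δ : ℕ) (hs0 : 0 < s) (hΔ0 : 0 < Δ) (hs : s ≤ n')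
    (hΔ : Δ ≤ n' - s + 1) :
    ((s : ℝ) * (Nat.choose (n' - s) (Δ - 1) : ℝ)) / (Nat.choose n' Δ : ℝ)
      ≤ Real.exp 1 * ((s : ℝ) * (Δ : ℝ) / (n' : ℝ)) *
          Real.exp (-((s : ℝ) * (Δ : ℝ) / (n' : ℝ))) := by
  have hn : 0 < n' := hs0.trans_le hs
  set p : ℝ := s * Δ / n' with hp
  calc (s * ((n' - s).choose (Δ - 1) : ℝ)) / (n'.choose Δ : ℝ)
      = p * (((n' - s).choose (Δ - 1) : ℝ) / (n' - 1).choose (Δ - 1)) := by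
        rw [cast_choose_eq_div_mul_choose_pred hn hΔ0, hp]
        field_simp
    _ ≤ p * exp (1 - p) := by gcongr; exact cast_choose_div_choose_le_exp hs0 hΔ0 hs hΔ
    _ = exp 1 * p * exp (-p) := by rw [sub_eq_add_neg, exp_add]; ring
end

section
/- Let t be a real number with 0 < t ≤ 1. Then the series ∑_{i=1}^{∞} t · 2^i · exp(−t · 2^i) converges and its sum is at most 2 + ∑_{j=0}^{∞} 2^{j+1} · exp(−2^j), which is strictly less than 10/e. -/
/-! Terms with `t * 2 ^ (i + 1) ≤ 1` are bounded by `t * 2 ^ (i + 1)` itself, and these form a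
geometric sum below `2`. For the remaining indices `i = j + k`, with `k` the largest exponent
such that `t * 2 ^ k ≤ 1`, the argument `t * 2 ^ (j + k + 1)` lies in `[2 ^ j, 2 ^ (j + 1)]`, so
the term is at most `2 ^ (j + 1) * exp (-2 ^ j)`. Since `2 ^ j ≥ j + 1`, the tail of that majorant
from index `m` on is dominated by a geometric series of ratio `2 * exp (-2 ^ m)`; with `m = 1`
this gives the numerical bound. -/

noncomputable section

namespace DyadicExpSum

def term (t : ℝ) (i : ℕ) : ℝ := t * 2 ^ (i + 1) * Real.exp (-(t * 2 ^ (i + 1)))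

def majorant (j : ℕ) : ℝ := 2 ^ (j + 1) * Real.exp (-2 ^ j)

lemma mul_exp_neg_le_of_le_of_le {a b x : ℝ} (hax : a ≤ x) (hxb : x ≤ b) (hb : 0 ≤ b) :
    x * Real.exp (-x) ≤ b * Real.exp (-a) :=
  mul_le_mul hxb (Real.exp_le_exp.2 (neg_le_neg hax)) (Real.exp_pos _).le hb

lemma two_mul_exp_neg_two_pow_lt_one (m : ℕ) : 2 * Real.exp (-2 ^ m) < 1 := by
  have he : 2 < Real.exp 1 := by linarith [Real.add_one_lt_exp one_ne_zero]
  have hm : Real.exp (-2 ^ m) ≤ Real.exp (-1) :=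
    Real.exp_le_exp.2 (neg_le_neg (one_le_pow₀ one_le_two))
  have hinv : Real.exp (-1) * Real.exp 1 = 1 := by rw [← Real.exp_add]; simp
  nlinarith [Real.exp_pos (-1)]

lemma majorant_add_le (m j : ℕ) :
    majorant (j + m) ≤ majorant m * (2 * Real.exp (-2 ^ m)) ^ j := by
  have hj : ((j : ℝ) + 1) ≤ 2 ^ j := by exact_mod_cast Nat.lt_two_pow_self
  have hexp : Real.exp (-2 ^ (j + m)) ≤ Real.exp (-2 ^ m) * Real.exp (-2 ^ m) ^ j := by
    rw [← Real.exp_nat_mul, ← Real.exp_add, pow_add]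
    gcongr
    nlinarith [pow_pos (two_pos (α := ℝ)) m]
  calc majorant (j + m) = 2 ^ (m + 1) * 2 ^ j * Real.exp (-2 ^ (j + m)) := by
        rw [majorant, ← pow_add]; ring_nf
    _ ≤ 2 ^ (m + 1) * 2 ^ j * (Real.exp (-2 ^ m) * Real.exp (-2 ^ m) ^ j) := by gcongr
    _ = majorant m * (2 * Real.exp (-2 ^ m)) ^ j := by rw [majorant]; ring

lemma hasSum_majorant_geometric (m : ℕ) :
    HasSum (fun j => majorant m * (2 * Real.exp (-2 ^ m)) ^ j)
      (majorant m / (1 - 2 * Real.exp (-2 ^ m))) := by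
  simpa only [div_eq_mul_inv] using
    (hasSum_geometric_of_lt_one (by positivity) (two_mul_exp_neg_two_pow_lt_one m)).mul_left
      (majorant m)

lemma majorant_nonneg (j : ℕ) : 0 ≤ majorant j := by
  unfold majorant; positivity

lemma summable_majorant_add (m : ℕ) : Summable (fun j => majorant (j + m)) :=
  (hasSum_majorant_geometric m).summable.of_nonneg_of_le (fun j => majorant_nonneg (j + m))
    (majorant_add_le m)

lemma summable_majorant : Summable majorant := by
  simpa using summable_majorant_add 0

lemma tsum_majorant_add_le (m : ℕ) :
    ∑' j, majorant (j + m) ≤ majorant m / (1 - 2 * Real.exp (-2 ^ m)) :=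
  hasSum_le (majorant_add_le m) (summable_majorant_add m).hasSum (hasSum_majorant_geometric m)

lemma two_add_tsum_majorant_lt : 2 + ∑' j, majorant j < 10 / Real.exp 1 := by
  set u := Real.exp (-1) with hu
  have hu_inv : u * Real.exp 1 = 1 := by rw [hu, ← Real.exp_add]; simp
  have hu_pos : 0 < u := Real.exp_pos _
  have hu_lo : 0.36 < u := by nlinarith [Real.exp_one_lt_d9]
  have hu_hi : u < 0.37 := by nlinarith [Real.exp_one_gt_d9]
  have hsq : Real.exp (-2 ^ 1) = u ^ 2 := by rw [hu, ← Real.exp_nat_mul]; norm_num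
  have h0 : majorant 0 = 2 * u := by norm_num [majorant, hu]
  have h1 : majorant 1 = 4 * u ^ 2 := by rw [majorant, hsq]; norm_num
  have htail := tsum_majorant_add_le 1
  rw [h1, hsq] at htail
  have hratio : 4 * u ^ 2 / (1 - 2 * u ^ 2) < 8 * u - 2 := by
    rw [div_lt_iff₀ (by nlinarith)]; nlinarith
  have hrhs : 10 / Real.exp 1 = 10 * u := by
    rw [hu, Real.exp_neg, div_eq_mul_inv]
  rw [summable_majorant.tsum_eq_zero_add, h0, hrhs]
  linarith

lemma exists_mul_two_pow_near {t : ℝ} (ht0 : 0 < t) (ht1 : t ≤ 1) :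
    ∃ k : ℕ, t * 2 ^ k ≤ 1 ∧ 1 < t * 2 ^ (k + 1) := by
  obtain ⟨k, hk1, hk2⟩ := exists_nat_pow_near (one_le_inv_iff₀.2 ⟨ht0, ht1⟩) one_lt_two
  refine ⟨k, ?_, ?_⟩
  · simpa [ht0.ne'] using mul_le_mul_of_nonneg_left hk1 ht0.le
  · simpa [ht0.ne'] using mul_lt_mul_of_pos_left hk2 ht0

lemma sum_range_two_pow_succ_lt (k : ℕ) : ∑ i ∈ Finset.range k, (2 : ℝ) ^ (i + 1) < 2 ^ (k + 1) := by
  induction k with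
  | zero => norm_num
  | succ k ih => rw [Finset.sum_range_succ, pow_succ _ (k + 1)]; linarith

section

variable {t : ℝ} {k : ℕ}

lemma term_nonneg (ht : 0 ≤ t) (i : ℕ) : 0 ≤ term t i := by
  unfold term; positivity

lemma term_le (ht : 0 ≤ t) (i : ℕ) : term t i ≤ t * 2 ^ (i + 1) :=
  mul_le_of_le_one_right (by positivity) (Real.exp_le_one_iff.2 (neg_nonpos.2 (by positivity)))

lemma sum_range_term_le (ht : 0 ≤ t) (hk : t * 2 ^ k ≤ 1) : ∑ i ∈ Finset.range k, term t i ≤ 2 :=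
  calc ∑ i ∈ Finset.range k, term t i ≤ t * ∑ i ∈ Finset.range k, (2 : ℝ) ^ (i + 1) := by
        rw [Finset.mul_sum]; exact Finset.sum_le_sum fun i _ => term_le ht i
    _ ≤ t * 2 ^ (k + 1) := by gcongr; exact (sum_range_two_pow_succ_lt k).le
    _ = 2 * (t * 2 ^ k) := by ring
    _ ≤ 2 := by linarith

lemma term_add_le_majorant (hk1 : t * 2 ^ k ≤ 1) (hk2 : 1 < t * 2 ^ (k + 1)) (j : ℕ) :
    term t (j + k) ≤ majorant j := by
  have hx : t * 2 ^ (j + k + 1) = t * 2 ^ (k + 1) * 2 ^ j := by ring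
  have hx' : t * 2 ^ (j + k + 1) = t * 2 ^ k * 2 ^ (j + 1) := by ring
  refine mul_exp_neg_le_of_le_of_le ?_ ?_ (by positivity)
  · rw [hx]; exact le_mul_of_one_le_left (by positivity) hk2.le
  · rw [hx']; exact mul_le_of_le_one_left (by positivity) hk1

lemma summable_term (ht : 0 ≤ t) (hk1 : t * 2 ^ k ≤ 1) (hk2 : 1 < t * 2 ^ (k + 1)) :
    Summable (term t) :=
  (summable_nat_add_iff k).1 <|
    summable_majorant.of_nonneg_of_le (fun j => term_nonneg ht (j + k)) (term_add_le_majorant hk1 hk2)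

lemma tsum_term_le (ht : 0 ≤ t) (hk1 : t * 2 ^ k ≤ 1) (hk2 : 1 < t * 2 ^ (k + 1)) :
    ∑' i, term t i ≤ 2 + ∑' j, majorant j := by
  have hs := summable_term ht hk1 hk2
  rw [← hs.sum_add_tsum_nat_add k]
  exact add_le_add (sum_range_term_le ht hk1) <|
    ((summable_nat_add_iff k).2 hs).tsum_le_tsum (term_add_le_majorant hk1 hk2) summable_majorant

end

end DyadicExpSum

end

open DyadicExpSum in
/-- For `0 < t ≤ 1`, the series `∑_{i=1}^∞ t * 2^i * exp (-t * 2^i)` converges and its sum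
is at most `2 + ∑_{j=0}^∞ 2^(j+1) * exp (-2^j)`, which is strictly less than `10 / e`. -/
theorem stmt_7 (t : ℝ) (ht0 : 0 < t) (ht1 : t ≤ 1) :
    Summable (fun i : ℕ => t * 2 ^ (i + 1) * Real.exp (-(t * 2 ^ (i + 1)))) ∧
    Summable (fun j : ℕ => (2 : ℝ) ^ (j + 1) * Real.exp (-(2 : ℝ) ^ j)) ∧
    (∑' i : ℕ, t * 2 ^ (i + 1) * Real.exp (-(t * 2 ^ (i + 1))))
      ≤ 2 + ∑' j : ℕ, (2 : ℝ) ^ (j + 1) * Real.exp (-(2 : ℝ) ^ j) ∧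
    2 + (∑' j : ℕ, (2 : ℝ) ^ (j + 1) * Real.exp (-(2 : ℝ) ^ j)) < 10 / Real.exp 1 := by
  obtain ⟨k, hk1, hk2⟩ := exists_mul_two_pow_near ht0 ht1
  exact ⟨summable_term ht0.le hk1 hk2, summable_majorant, tsum_term_le ht0.le hk1 hk2,
    two_add_tsum_majorant_lt⟩
end

section
/- Let n' and s be positive integers with 1 ≤ s ≤ n'. Then ∑_{i=1}^{⌊log₂ n'⌋} s · C(n' − s, 2^i − 1) / C(n', 2^i) ≤ 10, where C denotes the binomial coefficient and terms in which 2^i − 1 > n' − s are zero (since then C(n' − s, 2^i − 1) = 0). -/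
/-!
Write `T(Δ) = s·C(n'-s, Δ-1)/C(n', Δ)`. Choosing the hit element together with `k` further
elements of the `s`-set and `k` further elements of the `Δ`-set gives
`s·C(s-1,k)·C(n'-s,Δ-1)·C(Δ-1,k) ≤ (k+1)·C(n'-s,k)·C(n',Δ)`; for `k = 0` this is `T(Δ) ≤ 1` and
for `k = 1` it yields `T(Δ) ≤ 8n'/(sΔ)`. With the first-moment bound `T(Δ) ≤ sΔ/n'` and
`2^m ≈ n'/s`, the term `T(2^i)` is at most `2^(i-m)` for `i ≤ m` and at most `16·2^(m-i)` for
`i ≥ m+3`, so these two geometric tails sum to at most `2` and `4`, while the two terms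
`i = m+1, m+2` contribute at most `1` each.
-/

open Finset

theorem Nat.choose_mul_choose_sub_le_choose_add (a b : ℕ) {j k : ℕ} (hjk : j ≤ k) :
    a.choose j * b.choose (k - j) ≤ (a + b).choose k := by
  rw [Nat.add_choose_eq]
  exact single_le_sum (f := fun ij => a.choose ij.1 * b.choose ij.2) (fun _ _ => Nat.zero_le _)
    (a := (j, k - j)) (mem_antidiagonal.mpr (Nat.add_sub_cancel' hjk))

theorem Nat.mul_choose_mul_choose_le {n s Δ k : ℕ} (hsn : s ≤ n) (hkΔ : k < Δ) :
    s * (s - 1).choose k * ((n - s).choose (Δ - 1) * (Δ - 1).choose k)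
      ≤ (k + 1) * (n - s).choose k * n.choose Δ := by
  have h_s : s * (s - 1).choose k = s.choose (k + 1) * (k + 1) := by
    cases s with
    | zero => simp
    | succ t => exact Nat.add_one_mul_choose_eq t k
  have h_vandermonde : s.choose (k + 1) * (n - s).choose (Δ - (k + 1)) ≤ n.choose Δ := by
    simpa [Nat.add_sub_cancel' hsn] using
      Nat.choose_mul_choose_sub_le_choose_add s (n - s) (Nat.succ_le_of_lt hkΔ)
  have h_drop : (n - s - k).choose (Δ - 1 - k) ≤ (n - s).choose (Δ - (k + 1)) := by
    rw [Nat.sub_sub Δ 1 k, Nat.add_comm 1 k]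
    exact Nat.choose_le_choose _ (Nat.sub_le _ _)
  calc s * (s - 1).choose k * ((n - s).choose (Δ - 1) * (Δ - 1).choose k)
      = (k + 1) * (n - s).choose k * (s.choose (k + 1) * (n - s - k).choose (Δ - 1 - k)) := by
        rw [h_s, Nat.choose_mul (by omega)]; ring
    _ ≤ (k + 1) * (n - s).choose k * n.choose Δ :=
        Nat.mul_le_mul_left _ ((Nat.mul_le_mul_left _ h_drop).trans h_vandermonde)

theorem Nat.mul_choose_sub_le {n s Δ : ℕ} (hs : 1 ≤ s) (hΔ : 1 ≤ Δ) :
    n * (n - s).choose (Δ - 1) ≤ Δ * n.choose Δ := by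
  cases n with
  | zero => simp
  | succ t =>
    calc (t + 1) * (t + 1 - s).choose (Δ - 1) ≤ (t + 1) * t.choose (Δ - 1) :=
          Nat.mul_le_mul_left _ (Nat.choose_le_choose _ (by omega))
      _ = Δ * (t + 1).choose Δ := by
          rw [Nat.add_one_mul_choose_eq, Nat.sub_add_cancel hΔ, Nat.mul_comm]

theorem Nat.mul_pow_log_div_le {b n s : ℕ} (hs : 0 < s) (hsn : s ≤ n) :
    s * b ^ Nat.log b (n / s) ≤ n := by
  rw [Nat.mul_comm, ← Nat.le_div_iff_mul_le hs]
  exact Nat.pow_log_le_self b (Nat.div_pos hsn hs).ne'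

theorem Nat.lt_mul_pow_succ_log_div {b n s : ℕ} (hb : 1 < b) (hs : 0 < s) :
    n < s * b ^ (Nat.log b (n / s) + 1) := by
  rw [Nat.mul_comm, ← Nat.div_lt_iff_lt_mul hs]
  exact Nat.lt_pow_succ_log_self hb _

/-- The probability that a uniformly random `Δ`-subset of an `n`-set meets a fixed `s`-subset
in exactly one element. -/
noncomputable def singleHitProb (n s Δ : ℕ) : ℝ :=
  (s : ℝ) * ((n - s).choose (Δ - 1) : ℝ) / (n.choose Δ : ℝ)

section singleHitProb

variable {n s Δ : ℕ}

theorem singleHitProb_le_one (hsn : s ≤ n) (hΔ : 1 ≤ Δ) : singleHitProb n s Δ ≤ 1 := by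
  have h := Nat.mul_choose_mul_choose_le (k := 0) hsn hΔ
  simp only [Nat.choose_zero_right, mul_one, zero_add, one_mul] at h
  exact div_le_one_of_le₀ (by exact_mod_cast h) (Nat.cast_nonneg _)

theorem singleHitProb_le_mul_div (hs : 1 ≤ s) (hsn : s ≤ n) (hΔ : 1 ≤ Δ) :
    singleHitProb n s Δ ≤ s * Δ / n := by
  have hn : (0 : ℝ) < n := by exact_mod_cast hs.trans hsn
  have h : s * (n - s).choose (Δ - 1) * n ≤ s * Δ * n.choose Δ := by
    rw [Nat.mul_assoc, Nat.mul_comm _ n, Nat.mul_assoc s Δ]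
    exact Nat.mul_le_mul_left _ (Nat.mul_choose_sub_le hs hΔ)
  refine div_le_of_le_mul₀ (Nat.cast_nonneg _) (by positivity) ?_
  rw [div_mul_eq_mul_div, le_div_iff₀ hn]
  exact_mod_cast h

theorem singleHitProb_le_div_mul (hs : 2 ≤ s) (hsn : s ≤ n) (hΔ : 2 ≤ Δ) :
    singleHitProb n s Δ ≤ 8 * n / (s * Δ) := by
  have h := Nat.mul_choose_mul_choose_le (k := 1) hsn hΔ
  simp only [Nat.choose_one_right] at h
  have h_nat : s * Δ * (s * (n - s).choose (Δ - 1)) ≤ 8 * n * n.choose Δ := by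
    calc s * Δ * (s * (n - s).choose (Δ - 1))
        ≤ (2 * (s - 1)) * (2 * (Δ - 1)) * (s * (n - s).choose (Δ - 1)) := by
          gcongr <;> omega
      _ = 4 * (s * (s - 1) * ((n - s).choose (Δ - 1) * (Δ - 1))) := by ring
      _ ≤ 4 * ((1 + 1) * (n - s) * n.choose Δ) := Nat.mul_le_mul_left _ h
      _ ≤ 4 * (2 * n * n.choose Δ) := by gcongr; omega
      _ = 8 * n * n.choose Δ := by ring
  have hsΔ : (0 : ℝ) < s * Δ := by positivity
  refine div_le_of_le_mul₀ (Nat.cast_nonneg _) (by positivity) ?_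
  rw [div_mul_eq_mul_div, le_div_iff₀ hsΔ]
  calc (s : ℝ) * ((n - s).choose (Δ - 1) : ℕ) * (s * Δ)
      = ((s * Δ * (s * (n - s).choose (Δ - 1)) : ℕ) : ℝ) := by push_cast; ring
    _ ≤ ((8 * n * n.choose Δ : ℕ) : ℝ) := by exact_mod_cast h_nat
    _ = 8 * n * n.choose Δ := by push_cast; ring

theorem singleHitProb_two_pow_le_of_mul_le {m i : ℕ} (hs : 1 ≤ s) (hsn : s ≤ n)
    (hm : s * 2 ^ m ≤ n) : singleHitProb n s (2 ^ i) ≤ 2 ^ i / 2 ^ m := by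
  have hn : (0 : ℝ) < n := by exact_mod_cast hs.trans hsn
  have hm' : (s : ℝ) * 2 ^ m ≤ n := by exact_mod_cast hm
  calc singleHitProb n s (2 ^ i) ≤ s * (2 ^ i : ℕ) / n :=
        singleHitProb_le_mul_div hs hsn Nat.one_le_two_pow
    _ ≤ 2 ^ i / 2 ^ m := by
        rw [div_le_div_iff₀ hn (by positivity)]
        push_cast
        nlinarith [pow_pos (two_pos : (0 : ℝ) < 2) i]

theorem singleHitProb_two_pow_le_of_lt_mul {m i : ℕ} (hsn : s ≤ n) (hin : 2 ^ i ≤ n)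
    (hm : n < s * 2 ^ (m + 1)) (hmi : m + 3 ≤ i) :
    singleHitProb n s (2 ^ i) ≤ 16 * 2 ^ m / 2 ^ i := by
  have h_two_le : 2 ≤ s := by
    have h : 4 * 2 ^ (m + 1) < s * 2 ^ (m + 1) := by
      rw [show 4 * 2 ^ (m + 1) = 2 ^ (m + 3) by ring]
      exact ((Nat.pow_le_pow_right two_pos hmi).trans hin).trans_lt hm
    have := Nat.lt_of_mul_lt_mul_right h
    omega
  have hm' : (n : ℝ) < s * (2 * 2 ^ m) := by rw [← pow_succ']; exact_mod_cast hm
  calc singleHitProb n s (2 ^ i) ≤ 8 * n / (s * (2 ^ i : ℕ)) :=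
        singleHitProb_le_div_mul h_two_le hsn (Nat.le_self_pow (by omega) 2)
    _ ≤ 16 * 2 ^ m / 2 ^ i := by
        have hs' : (0 : ℝ) < s := by exact_mod_cast (by omega : 0 < s)
        rw [div_le_div_iff₀ (by positivity) (by positivity)]
        push_cast
        nlinarith [pow_pos (two_pos : (0 : ℝ) < 2) i]

end singleHitProb

theorem sum_two_pow_div_le {J : Finset ℕ} {m : ℕ} (hJ : ∀ i ∈ J, i ≤ m) :
    ∑ i ∈ J, (2 : ℝ) ^ i / 2 ^ m ≤ 2 := by
  calc ∑ i ∈ J, (2 : ℝ) ^ i / 2 ^ m ≤ ∑ i ∈ range (m + 1), (2 : ℝ) ^ i / 2 ^ m :=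
        sum_le_sum_of_subset_of_nonneg (fun i hi => mem_range_succ_iff.2 (hJ i hi))
          (fun _ _ _ => by positivity)
    _ = (2 ^ (m + 1) - 1) / 2 ^ m := by
        rw [← sum_div, geom_sum_eq (by norm_num : (2 : ℝ) ≠ 1)]; norm_num
    _ ≤ 2 := by
        rw [div_le_iff₀ (by positivity), pow_succ]; linarith

theorem sum_one_div_two_pow_le {J : Finset ℕ} {k : ℕ} (hJ : ∀ i ∈ J, k ≤ i) :
    ∑ i ∈ J, (1 : ℝ) / 2 ^ i ≤ 2 / 2 ^ k := by
  have hsub : J ⊆ Ico k (J.sup id + 1) := fun i hi =>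
    mem_Ico.2 ⟨hJ i hi, Nat.lt_succ_of_le (le_sup (f := id) hi)⟩
  calc ∑ i ∈ J, (1 : ℝ) / 2 ^ i ≤ ∑ i ∈ Ico k (J.sup id + 1), (1 / 2 : ℝ) ^ i := by
        simp only [one_div, inv_pow]
        exact sum_le_sum_of_subset_of_nonneg hsub (fun _ _ _ => by positivity)
    _ ≤ (1 / 2 : ℝ) ^ k / (1 - 1 / 2) := geom_sum_Ico_le_of_lt_one (by norm_num) (by norm_num)
    _ = 2 / 2 ^ k := by rw [one_div_pow]; field_simp; norm_num

theorem sum_le_of_dyadic_bounds {a : ℕ → ℝ} {I : Finset ℕ} {m : ℕ} {C : ℝ} (hC : 0 ≤ C)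
    (h_one : ∀ i ∈ I, a i ≤ 1) (h_low : ∀ i ∈ I, i ≤ m → a i ≤ 2 ^ i / 2 ^ m)
    (h_high : ∀ i ∈ I, m + 3 ≤ i → a i ≤ C * 2 ^ m / 2 ^ i) :
    ∑ i ∈ I, a i ≤ 4 + C / 4 := by
  set J := I.filter (¬ · ≤ m)
  rw [← sum_filter_add_sum_filter_not I (· ≤ m), ← sum_filter_add_sum_filter_not J (· ≤ m + 2)]
  have h_low_sum : ∑ i ∈ I.filter (· ≤ m), a i ≤ 2 := by
    refine (sum_le_sum fun i hi => ?_).trans (sum_two_pow_div_le (m := m) fun i hi => ?_)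
    · exact h_low i (mem_filter.1 hi).1 (mem_filter.1 hi).2
    · exact (mem_filter.1 hi).2
  have h_mid_sum : ∑ i ∈ J.filter (· ≤ m + 2), a i ≤ 2 := by
    have hsub : J.filter (· ≤ m + 2) ⊆ Icc (m + 1) (m + 2) := fun i hi => by
      simp only [J, mem_filter, mem_Icc] at hi ⊢; omega
    have hcard : (J.filter (· ≤ m + 2)).card ≤ 2 := by
      simpa using card_le_card hsub
    calc ∑ i ∈ J.filter (· ≤ m + 2), a i ≤ (J.filter (· ≤ m + 2)).card • (1 : ℝ) :=
          sum_le_card_nsmul _ _ _ fun i hi => h_one i (mem_filter.1 (mem_filter.1 hi).1).1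
      _ ≤ 2 := by rw [nsmul_one]; exact_mod_cast hcard
  have h_high_sum : ∑ i ∈ J.filter (¬ · ≤ m + 2), a i ≤ C / 4 := by
    have hJ : ∀ i ∈ J.filter (¬ · ≤ m + 2), m + 3 ≤ i := fun i hi => by
      simp only [J, mem_filter] at hi; omega
    calc ∑ i ∈ J.filter (¬ · ≤ m + 2), a i
        ≤ ∑ i ∈ J.filter (¬ · ≤ m + 2), C * 2 ^ m * (1 / 2 ^ i) :=
          sum_le_sum fun i hi => by
            rw [mul_one_div]; exact h_high i (mem_filter.1 (mem_filter.1 hi).1).1 (hJ i hi)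
      _ ≤ C * 2 ^ m * (2 / 2 ^ (m + 3)) := by
          rw [← mul_sum]; gcongr; exact sum_one_div_two_pow_le hJ
      _ = C / 4 := by field_simp; ring
  linarith

open Finset in
/-- For positive integers `s ≤ n'`,
`∑_{i=1}^{⌊log₂ n'⌋} s * C(n' - s, 2^i - 1) / C(n', 2^i) ≤ 10`
(terms with `2^i - 1 > n' - s` vanish since then the binomial coefficient is `0`). -/
theorem stmt_8 (n' s : ℕ) (hs : 1 ≤ s) (hsn : s ≤ n') :
    ∑ i ∈ Finset.Icc 1 (Nat.log 2 n'),
        ((s : ℝ) * (Nat.choose (n' - s) (2 ^ i - 1) : ℝ)) / (Nat.choose n' (2 ^ i) : ℝ)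
      ≤ 10 := by
  have h_pow_le : ∀ i ∈ Icc 1 (Nat.log 2 n'), 2 ^ i ≤ n' := fun i hi =>
    (Nat.pow_le_pow_right two_pos (mem_Icc.1 hi).2).trans
      (Nat.pow_log_le_self 2 (by omega))
  have h_sum : ∑ i ∈ Icc 1 (Nat.log 2 n'), singleHitProb n' s (2 ^ i) ≤ 4 + 16 / 4 :=
    sum_le_of_dyadic_bounds (m := Nat.log 2 (n' / s)) (by norm_num)
      (fun _ _ => singleHitProb_le_one hsn Nat.one_le_two_pow)
      (fun _ _ _ => singleHitProb_two_pow_le_of_mul_le hs hsn (Nat.mul_pow_log_div_le hs hsn))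
      (fun i hi hmi => singleHitProb_two_pow_le_of_lt_mul hsn (h_pow_le i hi)
        (Nat.lt_mul_pow_succ_log_div one_lt_two hs) hmi)
  exact h_sum.trans (by norm_num)
end

section
/- Let L be a positive integer and n' = 2^L. Consider the random bipartite graph with sender set Fin n' and receiver set R of size L·n' partitioned into classes R_1, …, R_L each of size n', where independently for each receiver v ∈ R_i the neighborhood N(v) is a uniformly random 2^i-element subset of Fin n'. Fix S' ⊆ Fin n' with |S'| = s ≥ 1. Then the probability that more than 20·n' receivers v satisfy |N(v) ∩ S'| = 1 is at most e^{−3n'}. -/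
/-!
Let `X` count the receivers hit exactly once. Since the neighbourhoods are independent,
`E[2 ^ X] = ∏ᵥ (1 + pᵥ) ≤ exp (∑ᵥ pᵥ)`, and Markov's inequality gives
`P(X > 20 n') ≤ exp (∑ᵥ pᵥ) / 2 ^ (20 n' + 1)`. For a receiver of class `i`, with
`x = |S'| 2 ^ (i + 1) / n'`, the hypergeometric probability `pᵥ` of meeting `S'` exactly once is
at most `x` (union bound) and at most `4 / x` (compare with meeting `S'` exactly twice). Along
the geometric sequence of the `x`'s these bounds sum to at most `8`, so `∑ᵥ pᵥ ≤ 8 n'`, and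
`e ^ (8 n') / 2 ^ (20 n') ≤ e ^ (-3 n')`.
-/

open Finset MeasureTheory ProbabilityTheory
open scoped ENNReal

theorem Finset.card_filter_powersetCard_card_inter_eq {α : Type*} [DecidableEq α]
    (S t : Finset α) {j k : ℕ} (hjk : j ≤ k) :
    #{T ∈ t.powersetCard k | #(T ∩ S) = j} =
      (#(t ∩ S)).choose j * (#(t \ S)).choose (k - j) := by
  rw [← card_powersetCard, ← card_powersetCard, ← card_product]
  have union_inter {A B : Finset α} (hA : A ⊆ S) (hB : Disjoint B S) : (A ∪ B) ∩ S = A := by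
    rw [union_inter_distrib_right, inter_eq_left.mpr hA, disjoint_iff_inter_eq_empty.mp hB,
      union_empty]
  have union_sdiff {A B : Finset α} (hA : A ⊆ S) (hB : Disjoint B S) : (A ∪ B) \ S = B := by
    rw [union_sdiff_distrib, sdiff_eq_empty_iff_subset.mpr hA, sdiff_eq_self_of_disjoint hB,
      empty_union]
  refine card_nbij' (fun T ↦ (T ∩ S, T \ S)) (fun p ↦ p.1 ∪ p.2) ?_ ?_ ?_ ?_
  · intro T hT
    simp only [mem_coe, mem_filter, mem_powersetCard, mem_product] at hT ⊢
    have := card_inter_add_card_sdiff T S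
    exact ⟨⟨inter_subset_inter_right hT.1.1, hT.2⟩, sdiff_subset_sdiff hT.1.1 le_rfl,
      by omega⟩
  · rintro ⟨A, B⟩ h
    obtain ⟨⟨hA, rfl⟩, hB, hBk⟩ := by
      simpa only [mem_coe, mem_product, mem_powersetCard] using h
    rw [subset_inter_iff] at hA
    rw [subset_sdiff] at hB
    simp only [mem_coe, mem_filter, mem_powersetCard]
    refine ⟨⟨union_subset hA.1 hB.1, ?_⟩, by rw [union_inter hA.2 hB.2]⟩
    rw [card_union_of_disjoint (disjoint_of_subset_left hA.2 hB.2.symm), hBk]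
    omega
  · intro T _
    exact sup_inf_sdiff T S
  · rintro ⟨A, B⟩ h
    obtain ⟨⟨hA, -⟩, hB, -⟩ := by
      simpa only [mem_coe, mem_product, mem_powersetCard] using h
    rw [subset_inter_iff] at hA
    rw [subset_sdiff] at hB
    simp only [union_inter hA.2 hB.2, union_sdiff hA.2 hB.2]

namespace Nat

theorem choose_mul_choose_le_add_choose (s m i j : ℕ) :
    s.choose i * m.choose j ≤ (s + m).choose (i + j) := by
  rw [add_choose_eq]
  exact single_le_sum (f := fun ij : ℕ × ℕ ↦ s.choose ij.1 * m.choose ij.2)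
    (fun _ _ ↦ Nat.zero_le _) (mem_antidiagonal.mpr rfl : (i, j) ∈ antidiagonal (i + j))

theorem add_mul_mul_choose_pred_le (s m : ℕ) {k : ℕ} (hk : 1 ≤ k) :
    (s + m) * (s * m.choose (k - 1)) ≤ s * k * (s + m).choose k := by
  obtain _ | s := s
  · simp
  obtain ⟨k, rfl⟩ := Nat.exists_eq_add_of_le' hk
  have hpascal := add_one_mul_choose_eq (s + m) k
  have hmono : m.choose k ≤ (s + m).choose k := choose_le_choose k (Nat.le_add_left m s)
  rw [Nat.add_sub_cancel, show s + 1 + m = s + m + 1 by ring]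
  calc (s + m + 1) * ((s + 1) * m.choose k)
      ≤ (s + 1) * ((s + m + 1) * (s + m).choose k) := by
        rw [mul_left_comm]; gcongr
    _ = (s + 1) * (k + 1) * (s + m + 1).choose (k + 1) := by rw [hpascal]; ring

theorem mul_mul_choose_pred_le_of_lt {s m k : ℕ} (hkn : k ≤ s + m) (hsk : 2 * (s + m) < s * k) :
    s * k * (s * m.choose (k - 1)) ≤ 4 * (s + m) * (s + m).choose k := by
  have hs : 3 ≤ s := by nlinarith
  have hk : 3 ≤ k := by nlinarith
  -- the only case with `s * k > 2 * (s - 1) * (k - 1)`; there `m ≤ 1`, so nothing is counted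
  by_cases h33 : s = 3 ∧ k = 3
  · obtain ⟨rfl, rfl⟩ := h33
    simp [choose_eq_zero_of_lt (show m < 3 - 1 by omega)]
  obtain ⟨j, rfl⟩ : ∃ j, k = j + 2 := ⟨k - 2, by omega⟩
  obtain ⟨r, rfl⟩ : ∃ r, s = r + 1 := ⟨s - 1, by omega⟩
  have hsk' : (r + 1) * (j + 2) ≤ 2 * (r * (j + 1)) := by
    have : r ≠ 2 ∨ j ≠ 1 := by omega
    rcases this with h | h
    · have : 3 ≤ r := by omega
      nlinarith
    · have : 2 ≤ j := by omega
      nlinarith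
  have hpascal_m := choose_succ_right_eq m j
  have hpascal_s : (r + 1).choose 2 * 2 = (r + 1) * r := by
    simpa using choose_succ_right_eq (r + 1) 1
  have hvdm := choose_mul_choose_le_add_choose (r + 1) m 2 j
  rw [show j + 2 - 1 = j + 1 by omega]
  calc (r + 1) * (j + 2) * ((r + 1) * m.choose (j + 1))
      ≤ 2 * (r * (j + 1)) * ((r + 1) * m.choose (j + 1)) := by gcongr
    _ = 2 * ((r + 1) * r) * (m.choose (j + 1) * (j + 1)) := by ring
    _ = 4 * ((r + 1).choose 2 * m.choose j) * (m - j) := by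
        rw [← hpascal_s, hpascal_m]; ring
    _ ≤ 4 * (r + 1 + m).choose (2 + j) * (r + 1 + m) := by gcongr; omega
    _ = 4 * (r + 1 + m) * (r + 1 + m).choose (j + 2) := by ring_nf
end Nat

theorem sum_range_min_two_pow_le (c : ℝ) (hc : 0 ≤ c) (L : ℕ) :
    ∑ i ∈ range L, min (c * 2 ^ i) (4 / (c * 2 ^ i)) ≤ 8 := by
  let F : ℝ → ℝ := fun x ↦ if x ≤ 2 then 2 * x else 8 - 8 / x
  have hF_step (x : ℝ) (hx : 0 ≤ x) : min x (4 / x) ≤ F (2 * x) - F x := by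
    simp only [F]
    rcases le_or_gt x 1 with h1 | h1
    · rw [if_pos (by linarith), if_pos (by linarith)]
      linarith [min_le_left x (4 / x)]
    rcases le_or_gt x 2 with h2 | h2
    · rw [if_neg (by linarith), if_pos h2]
      refine (min_le_left _ _).trans ?_
      have h8 : 8 / (2 * x) = 4 / x := by field_simp; norm_num
      have h4 : 4 / x ≤ 8 - 3 * x := by
        rw [div_le_iff₀ (by linarith)]
        nlinarith
      linarith
    · rw [if_neg (by linarith), if_neg (by linarith)]
      refine (min_le_right _ _).trans (le_of_eq ?_)
      field_simp
      ring
  have hF_bound (x : ℝ) (hx : 0 ≤ x) : 0 ≤ F x ∧ F x ≤ 8 := by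
    simp only [F]
    split_ifs with h
    · constructor <;> linarith
    · have : 0 < 8 / x := by push Not at h; positivity
      constructor
      · rw [sub_nonneg, div_le_iff₀ (by linarith)]; push Not at h; linarith
      · linarith
  calc ∑ i ∈ range L, min (c * 2 ^ i) (4 / (c * 2 ^ i))
      ≤ ∑ i ∈ range L, (F (c * 2 ^ (i + 1)) - F (c * 2 ^ i)) := by
        gcongr with i
        rw [pow_succ, mul_comm _ (2 : ℝ), ← mul_assoc, mul_comm _ (2 : ℝ), mul_assoc]
        exact hF_step _ (by positivity)
    _ = F (c * 2 ^ L) - F (c * 2 ^ 0) := sum_range_sub (fun i ↦ F (c * 2 ^ i)) L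
    _ ≤ 8 := by
        linarith [hF_bound (c * 2 ^ L) (by positivity), hF_bound (c * 2 ^ 0) (by positivity)]

theorem ENNReal.one_add_le_ofReal_exp {x : ℝ≥0∞} (hx : x ≠ ⊤) :
    1 + x ≤ ENNReal.ofReal (Real.exp x.toReal) := by
  rw [← ENNReal.ofReal_toReal hx, ← ENNReal.ofReal_one, ← ENNReal.ofReal_add zero_le_one
    ENNReal.toReal_nonneg, ENNReal.toReal_ofReal ENNReal.toReal_nonneg, add_comm]
  exact ENNReal.ofReal_le_ofReal (Real.add_one_le_exp _)

theorem ENNReal.prod_one_add_le_ofReal_exp {ι : Type*} (s : Finset ι) {x : ι → ℝ≥0∞}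
    (hx : ∀ i ∈ s, x i ≠ ⊤) :
    ∏ i ∈ s, (1 + x i) ≤ ENNReal.ofReal (Real.exp (∑ i ∈ s, (x i).toReal)) := by
  rw [Real.exp_sum, ENNReal.ofReal_prod_of_nonneg fun _ _ ↦ (Real.exp_pos _).le]
  exact prod_le_prod' fun i hi ↦ one_add_le_ofReal_exp (hx i hi)

section Chernoff

variable {ι : Type*} [Fintype ι] {Ω : ι → Type*} [∀ i, MeasurableSpace (Ω i)]
  (μ : ∀ i, Measure (Ω i)) [∀ i, IsProbabilityMeasure (μ i)]
  {A : ∀ i, Set (Ω i)} [∀ i, DecidablePred (· ∈ A i)]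

theorem pow_mul_measure_pi_le_card_filter_mem_le (hA : ∀ i, MeasurableSet (A i)) (m : ℕ) :
    2 ^ m * Measure.pi μ {ω | m ≤ #{i | ω i ∈ A i}} ≤ ∏ i, (1 + μ i (A i)) := by
  let g (i : ι) : Ω i → ℝ≥0∞ := 1 + (A i).indicator 1
  have hg_meas (i : ι) : Measurable (g i) :=
    measurable_const.add (measurable_const.indicator (hA i))
  have hg_meas_eval (i : ι) : Measurable fun ω : ∀ i, Ω i ↦ g i (ω i) :=
    (hg_meas i).comp (measurable_pi_apply i)
  have hg_int (i : ι) : ∫⁻ x, g i x ∂μ i = 1 + μ i (A i) := by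
    simp only [g, Pi.add_apply, Pi.one_apply]
    rw [lintegral_add_left measurable_const, lintegral_const, measure_univ, mul_one,
      lintegral_indicator_one (hA i)]
  have hg_prod (ω : ∀ i, Ω i) : ∏ i, g i (ω i) = 2 ^ #{i | ω i ∈ A i} := by
    simp only [g, Pi.add_apply, Pi.one_apply, Set.indicator_apply, add_ite, add_zero,
      one_add_one_eq_two]
    rw [prod_ite, prod_const, prod_const_one, mul_one]
  calc 2 ^ m * Measure.pi μ {ω | m ≤ #{i | ω i ∈ A i}}
      ≤ 2 ^ m * Measure.pi μ {ω | 2 ^ m ≤ ∏ i, g i (ω i)} := by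
        refine mul_le_mul_right (measure_mono fun ω hω ↦ ?_) _
        rw [Set.mem_ofPred_eq, hg_prod]
        exact pow_le_pow_right₀ one_le_two hω
    _ ≤ ∫⁻ ω, ∏ i, g i (ω i) ∂Measure.pi μ :=
        mul_meas_ge_le_lintegral (Finset.measurable_prod _ fun i _ ↦ hg_meas_eval i) _
    _ = ∏ i, (1 + μ i (A i)) := by
        rw [lintegral_prod_eq_prod_lintegral_of_indepFun _ _
          (iIndepFun_pi fun i ↦ (hg_meas i).aemeasurable) hg_meas_eval]
        refine prod_congr rfl fun i _ ↦ ?_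
        rw [← hg_int i]
        exact (measurePreserving_eval μ i).lintegral_comp (hg_meas i)

theorem measure_pi_le_card_filter_mem_le_exp (hA : ∀ i, MeasurableSet (A i)) (m : ℕ) :
    Measure.pi μ {ω | m ≤ #{i | ω i ∈ A i}} ≤
      ENNReal.ofReal (Real.exp (∑ i, (μ i).real (A i)) / 2 ^ m) := by
  rw [ENNReal.ofReal_div_of_pos (by positivity), ENNReal.le_div_iff_mul_le (by simp) (by simp),
    mul_comm, ENNReal.ofReal_pow zero_le_two, ENNReal.ofReal_ofNat]
  exact (pow_mul_measure_pi_le_card_filter_mem_le μ hA m).trans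
    (ENNReal.prod_one_add_le_ofReal_exp _ fun i _ ↦ measure_ne_top _ _)

end Chernoff

theorem mul_choose_pred_div_choose_le_min {s m k : ℕ} (hk : 1 ≤ k) (hkn : k ≤ s + m) :
    ((s * m.choose (k - 1) : ℕ) : ℝ) / (s + m).choose k ≤
      min ((s * k : ℝ) / (s + m)) (4 / ((s * k : ℝ) / (s + m))) := by
  have hn : (0 : ℝ) < s + m := by exact_mod_cast (by omega : 0 < s + m)
  have hC : (0 : ℝ) < (s + m).choose k := by exact_mod_cast Nat.choose_pos hkn
  refine le_min ?_ ?_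
  · rw [div_le_div_iff₀ hC hn]
    exact_mod_cast (by linarith [Nat.add_mul_mul_choose_pred_le s m hk] :
      s * m.choose (k - 1) * (s + m) ≤ s * k * (s + m).choose k)
  by_cases hsk : 2 * (s + m) < s * k
  · rw [div_div_eq_mul_div, div_le_div_iff₀ hC (by exact_mod_cast Nat.zero_lt_of_lt hsk)]
    exact_mod_cast (by linarith [Nat.mul_mul_choose_pred_le_of_lt hkn hsk] :
      s * m.choose (k - 1) * (s * k) ≤ 4 * (s + m) * (s + m).choose k)
  obtain rfl | hs := Nat.eq_zero_or_pos s
  · simp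
  have hle_one : ((s * m.choose (k - 1) : ℕ) : ℝ) / (s + m).choose k ≤ 1 := by
    rw [div_le_one hC]
    exact_mod_cast (by simpa [Nat.add_sub_cancel' hk] using
      Nat.choose_mul_choose_le_add_choose s m 1 (k - 1))
  have hx : (s * k : ℝ) / (s + m) ≤ 2 := by
    rw [div_le_iff₀ hn]
    exact_mod_cast (by omega : s * k ≤ 2 * (s + m))
  have hx0 : (0 : ℝ) < s * k / (s + m) := by positivity
  calc _ ≤ (1 : ℝ) := hle_one
    _ ≤ 4 / (s * k / (s + m)) := by rw [le_div_iff₀ hx0]; linarith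

theorem measureReal_uniformOfFinset_powersetCard_card_inter_eq_one_le {α : Type*} [DecidableEq α]
    [MeasurableSpace (Finset α)] [DiscreteMeasurableSpace (Finset α)] (S t : Finset α) {k : ℕ}
    (hk : 1 ≤ k) (h : (t.powersetCard k).Nonempty) :
    (PMF.uniformOfFinset _ h).toMeasure.real {T | #(T ∩ S) = 1} ≤
      min ((#(t ∩ S) * k : ℝ) / #t) (4 / ((#(t ∩ S) * k : ℝ) / #t)) := by
  classical
  have hkn : k ≤ #(t ∩ S) + #(t \ S) := by
    rw [card_inter_add_card_sdiff]; exact powersetCard_nonempty.mp h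
  rw [measureReal_def, PMF.toMeasure_uniformOfFinset_apply h _ MeasurableSet.of_discrete,
    ENNReal.toReal_div]
  simp only [Set.mem_ofPred_eq, ENNReal.toReal_natCast]
  rw [card_filter_powersetCard_card_inter_eq S t hk, Nat.choose_one_right, card_powersetCard,
    ← card_inter_add_card_sdiff t S]
  push_cast
  exact_mod_cast mul_choose_pred_div_choose_le_min hk hkn

theorem stmt_11_general (L : ℕ) (n' : ℕ) (S' : Finset (Fin n'))
    (hne : ∀ i : Fin L,
      ((Finset.univ : Finset (Fin n')).powersetCard (2 ^ ((i : ℕ) + 1))).Nonempty) :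
    letI : MeasurableSpace (Finset (Fin n')) := ⊤
    (Measure.pi fun v : Fin L × Fin n' =>
        (PMF.uniformOfFinset _ (hne v.1)).toMeasure)
      {N : Fin L × Fin n' → Finset (Fin n') |
        20 * n' < (Finset.univ.filter
            (fun v : Fin L × Fin n' => ((N v) ∩ S').card = 1)).card}
      ≤ ENNReal.ofReal (Real.exp (-(3 * (n' : ℝ)))) := by
  let _ : MeasurableSpace (Finset (Fin n')) := ⊤
  let μ (i : Fin L) := (PMF.uniformOfFinset _ (hne i)).toMeasure
  let c : ℝ := 2 * #S' / n'
  let p (i : Fin L) := (μ i).real {T | #(T ∩ S') = 1}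
  have hp (i : Fin L) : p i ≤ min (c * 2 ^ (i : ℕ)) (4 / (c * 2 ^ (i : ℕ))) := by
    have hx : c * 2 ^ (i : ℕ) =
        (#(univ ∩ S') * (2 ^ ((i : ℕ) + 1) : ℕ) : ℝ) / #(univ : Finset (Fin n')) := by
      simp [c]; ring
    rw [hx]
    exact measureReal_uniformOfFinset_powersetCard_card_inter_eq_one_le S' univ
      Nat.one_le_two_pow (hne i)
  have hsum : ∑ v : Fin L × Fin n', p v.1 ≤ 8 * n' := calc
    ∑ v : Fin L × Fin n', p v.1 = n' * ∑ i, p i := by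
      simp [Fintype.sum_prod_type, mul_sum]
    _ ≤ n' * ∑ i ∈ range L, min (c * 2 ^ i) (4 / (c * 2 ^ i)) := by
      rw [← Fin.sum_univ_eq_sum_range (fun i ↦ min (c * 2 ^ i) (4 / (c * 2 ^ i))) L]
      gcongr with i
      exact hp i
    _ ≤ n' * 8 := by gcongr; exact sum_range_min_two_pow_le c (by positivity) L
    _ = 8 * n' := mul_comm _ _
  have hchernoff := measure_pi_le_card_filter_mem_le_exp (fun v : Fin L × Fin n' ↦ μ v.1)
    (A := fun _ ↦ {T : Finset (Fin n') | #(T ∩ S') = 1}) (fun _ ↦ .of_discrete) (20 * n' + 1)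
  refine hchernoff.trans (ENNReal.ofReal_le_ofReal ?_)
  have h2pow : Real.exp (11 * n') ≤ 2 ^ (20 * n' + 1) := by
    rw [← Real.rpow_natCast, Real.rpow_def_of_pos two_pos, Real.exp_le_exp]
    push_cast
    nlinarith [Real.log_two_gt_d9, (Nat.cast_nonneg n' : (0 : ℝ) ≤ n')]
  calc Real.exp (∑ v : Fin L × Fin n', p v.1) / 2 ^ (20 * n' + 1)
      ≤ Real.exp (8 * n') / Real.exp (11 * n') :=
        div_le_div₀ (Real.exp_pos _).le (Real.exp_le_exp.mpr hsum) (Real.exp_pos _) h2pow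
    _ = Real.exp (-(3 * n')) := by rw [← Real.exp_sub]; ring_nf

/-- Let `L` be a positive integer and `n' = 2^L`. In the random bipartite graph with sender
set `Fin n'` and receiver set `Fin L × Fin n'` (class `i : Fin L`, i.e. class `R_{i+1}`,
has size `n'`), where independently each receiver in class `R_{i+1}` gets a uniformly random
`2^(i+1)`-element subset of `Fin n'` as its neighborhood, for any fixed `S' ⊆ Fin n'` with
`|S'| = s ≥ 1`, the probability that more than `20 * n'` receivers `v` satisfy
`|N(v) ∩ S'| = 1` is at most `exp (-3 * n')`. -/
theorem stmt_11 (L : ℕ) (hL : 0 < L) (n' : ℕ) (hn' : n' = 2 ^ L)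
    (s : ℕ) (hs : 1 ≤ s) (S' : Finset (Fin n')) (hS' : S'.card = s)
    (hne : ∀ i : Fin L,
      ((Finset.univ : Finset (Fin n')).powersetCard (2 ^ ((i : ℕ) + 1))).Nonempty) :
    letI : MeasurableSpace (Finset (Fin n')) := ⊤
    (Measure.pi fun v : Fin L × Fin n' =>
        (PMF.uniformOfFinset _ (hne v.1)).toMeasure)
      {N : Fin L × Fin n' → Finset (Fin n') |
        20 * n' < (Finset.univ.filter
            (fun v : Fin L × Fin n' => ((N v) ∩ S').card = 1)).card}
      ≤ ENNReal.ofReal (Real.exp (-(3 * (n' : ℝ)))) :=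
  stmt_11_general L n' S' hne
end

section
/- Let L be a positive integer and n' = 2^L. Consider the random bipartite graph with sender set Fin n' and receiver set R of size L·n' partitioned into classes R_1, …, R_L each of size n', where independently for each receiver v ∈ R_i the neighborhood N(v) is a uniformly random 2^i-element subset of Fin n'. Then with probability at least 1 − e^{−2n'}, the random graph has the property that for every subset S' ⊆ Fin n', the number of receivers v with |N(v) ∩ S'| = 1 is at most 20·n'. -/
/-!
Fix `S'` with `|S'| = s`. A receiver whose neighbourhood is a uniform `k`-subset of the `n`
senders hears `S'` exactly once with probability
`p = s·C(n-s,k-1)/C(n,k) ≤ (sk/n)·exp(-(k-1)(s-1)/n)`, independently of the other receivers,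
so the number `X` of such receivers has `E[2^X] = ∏ (1 + p_v) ≤ exp (∑ p_v)`.
For `k = 2^(i+1)` and `x_i = s·2^(i+1)/n` this gives `p ≤ min(x_i, 9/x_i)`, and along the
doubling sequence `x_i` these minima add up to at most `9`: the terms below the last `x_i ≤ 3`
form a geometric series, and so do the reciprocals above it.
Hence `E[2^X] ≤ e^(9n)`, Markov's inequality gives `P(X > 20n) ≤ e^(9n)/2^(20n+1)`, and a union
bound over the `2^n` sets `S'` stays below `e^(-2n)` because `e^11 ≤ 2^19`.
-/

open MeasureTheory Finset Real
open scoped ENNReal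

theorem card_filter_card_inter_eq_one_le {α : Type*} [Fintype α] [DecidableEq α]
    (S : Finset α) (k : ℕ) :
    #{A ∈ univ.powersetCard k | #(A ∩ S) = 1} ≤ #S * (Fintype.card α - #S).choose (k - 1) :=
  calc #{A ∈ univ.powersetCard k | #(A ∩ S) = 1}
      ≤ #((S.powersetCard 1 ×ˢ Sᶜ.powersetCard (k - 1)).image fun p => p.1 ∪ p.2) := by
        refine card_le_card fun A hA => mem_image.2
          ⟨(A ∩ S, A \ S), ?_, (union_comm _ _).trans (sdiff_union_inter A S)⟩
        simp only [mem_filter, mem_powersetCard_univ] at hA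
        have := card_sdiff_add_card_inter A S
        simp only [mem_product, mem_powersetCard]
        exact ⟨⟨inter_subset_right, hA.2⟩, fun x hx => by simp_all, by omega⟩
    _ ≤ #(S.powersetCard 1 ×ˢ Sᶜ.powersetCard (k - 1)) := card_image_le
    _ = #S * (Fintype.card α - #S).choose (k - 1) := by
        rw [card_product, card_powersetCard, card_powersetCard, Nat.choose_one_right, card_compl]

theorem choose_le_choose_succ_mul {m n : ℕ} (r : ℕ) (h : m + 1 ≤ n) :
    (m.choose r : ℝ) ≤ (m + 1).choose r * (1 - r / n) := by
  rcases le_or_gt r (m + 1) with hr | hr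
  · have hid : (m.choose r : ℝ) * (m + 1) = (m + 1).choose r * (m + 1 - r) := by
      have := Nat.choose_mul_succ_eq m r
      rw [← Nat.cast_add_one, ← Nat.cast_sub hr]
      exact_mod_cast this
    have hn : (m + 1 : ℝ) ≤ n := by exact_mod_cast h
    have hm : (0 : ℝ) < m + 1 := by positivity
    rw [← mul_le_mul_iff_left₀ hm, hid, mul_assoc]
    gcongr
    have : (r : ℝ) / n * (m + 1) ≤ r := by
      rw [div_mul_eq_mul_div, div_le_iff₀ (by linarith)]
      gcongr
    linarith
  · simp [Nat.choose_eq_zero_of_lt hr, Nat.choose_eq_zero_of_lt (by omega : m < r)]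

theorem choose_le_choose_add_mul_pow {m n r : ℕ} (hr : r ≤ n) :
    ∀ j, m + j ≤ n → (m.choose r : ℝ) ≤ (m + j).choose r * (1 - r / n) ^ j
  | 0, _ => by simp
  | j + 1, h => by
    have hq : 0 ≤ 1 - (r : ℝ) / n :=
      sub_nonneg.2 (div_le_one_of_le₀ (by exact_mod_cast hr) (Nat.cast_nonneg n))
    calc (m.choose r : ℝ) ≤ (m + j).choose r * (1 - r / n) ^ j :=
          choose_le_choose_add_mul_pow hr j (by omega)
      _ ≤ (m + j + 1).choose r * (1 - r / n) * (1 - r / n) ^ j := by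
          gcongr
          exact choose_le_choose_succ_mul r (by omega)
      _ = _ := by rw [← add_assoc, pow_succ]; ring

theorem choose_le_choose_add_mul_exp {m n r j : ℕ} (hr : r ≤ n) (h : m + j ≤ n) :
    (m.choose r : ℝ) ≤ (m + j).choose r * exp (-(r * j / n)) :=
  calc (m.choose r : ℝ) ≤ (m + j).choose r * (1 - r / n) ^ j :=
        choose_le_choose_add_mul_pow hr j h
    _ ≤ (m + j).choose r * exp (-(r / n)) ^ j := by
        have : (r : ℝ) / n ≤ 1 := div_le_one_of_le₀ (by exact_mod_cast hr) (Nat.cast_nonneg n)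
        gcongr
        exact one_sub_le_exp_neg _
    _ = (m + j).choose r * exp (-(r * j / n)) := by rw [← exp_nat_mul]; ring_nf

/-- The probability that a uniformly random `k`-subset of an `n`-set meets a fixed `s`-set in
exactly one point. -/
noncomputable def hitOnceProb (n k s : ℕ) : ℝ := s * (n - s).choose (k - 1) / n.choose k

theorem hitOnceProb_nonneg (n k s : ℕ) : 0 ≤ hitOnceProb n k s := by
  unfold hitOnceProb
  positivity

theorem hitOnceProb_le {n k s : ℕ} (hk : 1 ≤ k) (hkn : k ≤ n) (hs : 1 ≤ s) (hsn : s ≤ n) :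
    hitOnceProb n k s ≤ s * k / n * exp (-((k - 1) * (s - 1) / n)) := by
  obtain ⟨r, rfl⟩ : ∃ r, k = r + 1 := ⟨k - 1, by omega⟩
  obtain ⟨j, rfl⟩ : ∃ j, s = j + 1 := ⟨s - 1, by omega⟩
  obtain ⟨m, rfl⟩ : ∃ m, n = m + j + 1 := ⟨n - (j + 1), by omega⟩
  have hC : (0 : ℝ) < (m + j + 1).choose (r + 1) := by exact_mod_cast Nat.choose_pos hkn
  have hid :
      ((m + j + 1 : ℕ) : ℝ) * (m + j).choose r = (m + j + 1).choose (r + 1) * (r + 1) := by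
    exact_mod_cast Nat.add_one_mul_choose_eq (m + j) r
  have key := choose_le_choose_add_mul_exp (m := m) (j := j) (by omega : r ≤ m + j + 1) (by omega)
  rw [hitOnceProb, div_le_iff₀ hC, show m + j + 1 - (j + 1) = m by omega, Nat.add_sub_cancel]
  push_cast at hid key ⊢
  simp only [add_sub_cancel_right]
  set E := exp (-(r * j / (m + j + 1 : ℝ)))
  calc ((j : ℝ) + 1) * m.choose r ≤ (j + 1) * ((m + j).choose r * E) := by gcongr
    _ = _ := by
        field_simp
        linear_combination E * hid

theorem sq_mul_exp_neg_div_four_le {x : ℝ} (hx : 0 ≤ x) : x ^ 2 * exp (-x / 4) ≤ 3 ^ 2 := by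
  have hx8 : (x / 8) ^ 2 ≤ exp (x / 4 - 2) :=
    calc (x / 8) ^ 2 ≤ exp (x / 8 - 1) ^ 2 := by
          gcongr
          linarith [add_one_le_exp (x / 8 - 1)]
      _ = exp (x / 4 - 2) := by rw [← exp_nat_mul]; ring_nf
  have he : 64 ≤ 3 ^ 2 * exp 2 := by
    have : (2.7 : ℝ) ≤ exp 1 := by linarith [exp_one_gt_d9]
    have h2 : exp 2 = exp 1 ^ 2 := by rw [← exp_nat_mul]; norm_num
    nlinarith
  calc x ^ 2 * exp (-x / 4) = 64 * (x / 8) ^ 2 * exp (-x / 4) := by ring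
    _ ≤ 64 * exp (x / 4 - 2) * exp (-x / 4) := by gcongr
    _ = 64 / exp 2 := by
        rw [mul_assoc, ← exp_add, show x / 4 - 2 + -x / 4 = -2 by ring, exp_neg, div_eq_mul_inv]
    _ ≤ 3 ^ 2 := by rw [div_le_iff₀ (exp_pos 2)]; exact he

theorem hitOnceProb_le_min {n k s : ℕ} (hk : 2 ≤ k) (hkn : k ≤ n) (hs : 1 ≤ s)
    (hsn : s ≤ n) :
    hitOnceProb n k s ≤ min ((s : ℝ) * k / n) (3 ^ 2 / (s * k / n)) := by
  have hkR : (2 : ℝ) ≤ k := by exact_mod_cast hk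
  have hsR : (1 : ℝ) ≤ s := by exact_mod_cast hs
  have hnR : (0 : ℝ) < n := by exact_mod_cast (by omega : 0 < n)
  set x : ℝ := s * k / n with hx_def
  have hx : 0 < x := by positivity
  have h := hitOnceProb_le (by omega) hkn hs hsn
  have hle : hitOnceProb n k s ≤ x := by
    refine h.trans (mul_le_of_le_one_right hx.le (exp_le_one_iff.2 ?_))
    have : 0 ≤ ((k : ℝ) - 1) * (s - 1) / n := div_nonneg (by nlinarith) hnR.le
    linarith
  refine le_min hle ?_
  rw [le_div_iff₀ hx]
  rcases hs.eq_or_lt with rfl | hs2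
  · have hx1 : x ≤ 1 := by
      rw [hx_def, Nat.cast_one, one_mul, div_le_one hnR]
      exact_mod_cast hkn
    nlinarith
  · have hsR2 : (2 : ℝ) ≤ s := by exact_mod_cast hs2
    have hexp : exp (-((k - 1) * (s - 1) / n)) ≤ exp (-x / 4) := by
      have : (s : ℝ) * k ≤ (k - 1) * (s - 1) * 4 := by
        nlinarith [mul_nonneg (sub_nonneg.2 hkR) (sub_nonneg.2 hsR2)]
      rw [exp_le_exp, hx_def, neg_div, neg_le_neg_iff, div_div,
        div_le_div_iff₀ (by positivity) hnR]
      nlinarith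
    calc hitOnceProb n k s * x ≤ x * exp (-x / 4) * x := by
          gcongr
          exact h.trans (by gcongr)
      _ = x ^ 2 * exp (-x / 4) := by ring
      _ ≤ 3 ^ 2 := sq_mul_exp_neg_div_four_le hx.le

section LacunarySums

variable {a c : ℝ} {T : Finset ℕ} {N : ℕ}

theorem sum_mul_two_pow_le (ha : 0 ≤ a) (h : ∀ i ∈ T, i < N) :
    ∑ i ∈ T, a * 2 ^ i ≤ a * 2 ^ N := by
  rw [← mul_sum]
  gcongr
  exact_mod_cast (Nat.geomSum_lt le_rfl h).le

theorem sum_half_pow_le_two (S : Finset ℕ) : ∑ j ∈ S, (1 / 2 : ℝ) ^ j ≤ 2 := by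
  obtain ⟨n, hn⟩ := exists_nat_subset_range S
  exact (sum_le_sum_of_subset_of_nonneg hn fun _ _ _ => by positivity).trans
    (sum_geometric_two_le n)

theorem sum_inv_mul_two_pow_le (ha : 0 < a) (h : ∀ i ∈ T, N ≤ i) :
    ∑ i ∈ T, (a * 2 ^ i)⁻¹ ≤ 2 * (a * 2 ^ N)⁻¹ := by
  have hsplit : ∀ i ∈ T, (a * 2 ^ i)⁻¹ = (a * 2 ^ N)⁻¹ * (1 / 2) ^ (i - N) := by
    intro i hi
    obtain ⟨d, rfl⟩ := Nat.exists_eq_add_of_le (h i hi)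
    rw [Nat.add_sub_cancel_left, pow_add, one_div, inv_pow, mul_inv, mul_inv]
    ring
  have hinj : ∀ i ∈ T, ∀ j ∈ T, i - N = j - N → i = j := fun i hi j hj hij => by
    have := h i hi
    have := h j hj
    omega
  rw [sum_congr rfl hsplit, ← mul_sum, ← sum_image (f := fun j => (1 / 2 : ℝ) ^ j) hinj,
    mul_comm]
  gcongr
  exact sum_half_pow_le_two _

theorem sum_min_mul_two_pow_le_of_le (ha : 0 < a) (h : ∀ i ∈ T, N ≤ i) :
    ∑ i ∈ T, min (a * 2 ^ i) (c ^ 2 / (a * 2 ^ i)) ≤ 2 * (c ^ 2 / (a * 2 ^ N)) :=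
  calc ∑ i ∈ T, min (a * 2 ^ i) (c ^ 2 / (a * 2 ^ i))
        ≤ ∑ i ∈ T, c ^ 2 * (a * 2 ^ i)⁻¹ :=
        sum_le_sum fun _ _ => (min_le_right _ _).trans_eq (div_eq_mul_inv _ _)
    _ ≤ c ^ 2 * (2 * (a * 2 ^ N)⁻¹) := by
        rw [← mul_sum]
        gcongr
        exact sum_inv_mul_two_pow_le ha h
    _ = 2 * (c ^ 2 / (a * 2 ^ N)) := by ring

theorem sum_min_mul_two_pow_le_of_split (ha : 0 < a) (T : Finset ℕ) (M : ℕ) :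
    ∑ i ∈ T, min (a * 2 ^ i) (c ^ 2 / (a * 2 ^ i))
      ≤ 2 * (a * 2 ^ M) + c ^ 2 / (a * 2 ^ M) := by
  rw [← sum_filter_add_sum_filter_not T (· ≤ M)]
  gcongr ?_ + ?_
  · calc ∑ i ∈ T with i ≤ M, min (a * 2 ^ i) (c ^ 2 / (a * 2 ^ i))
          ≤ ∑ i ∈ T with i ≤ M, a * 2 ^ i := sum_le_sum fun _ _ => min_le_left _ _
      _ ≤ a * 2 ^ (M + 1) := sum_mul_two_pow_le ha.le fun i hi => by simp at hi; omega
      _ = 2 * (a * 2 ^ M) := by ring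
  · calc ∑ i ∈ T with ¬i ≤ M, min (a * 2 ^ i) (c ^ 2 / (a * 2 ^ i))
          ≤ 2 * (c ^ 2 / (a * 2 ^ (M + 1))) :=
          sum_min_mul_two_pow_le_of_le ha fun i hi => by simp at hi; omega
      _ = c ^ 2 / (a * 2 ^ M) := by rw [pow_succ]; field_simp; ring

theorem sum_min_mul_two_pow_le (ha : 0 < a) (hc : 0 < c) (T : Finset ℕ) :
    ∑ i ∈ T, min (a * 2 ^ i) (c ^ 2 / (a * 2 ^ i)) ≤ 3 * c := by
  rcases le_or_gt c a with hca | hac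
  · calc ∑ i ∈ T, min (a * 2 ^ i) (c ^ 2 / (a * 2 ^ i)) ≤ 2 * (c ^ 2 / (a * 2 ^ 0)) :=
          sum_min_mul_two_pow_le_of_le ha fun _ _ => Nat.zero_le _
      _ ≤ 3 * c := by
          rw [pow_zero, mul_one, ← mul_div_assoc, div_le_iff₀ ha]
          nlinarith
  · -- split at `y = a * 2 ^ M ∈ (c / 2, c]`, where `2 * y + c ^ 2 / y ≤ 3 * c`
    obtain ⟨M, hM, hM'⟩ := exists_nat_pow_near ((one_le_div ha).2 hac.le) one_lt_two
    rw [le_div_iff₀ ha, mul_comm] at hM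
    rw [div_lt_iff₀ ha, pow_succ, mul_comm, ← mul_assoc] at hM'
    refine (sum_min_mul_two_pow_le_of_split ha T M).trans ?_
    have hy : 0 < a * 2 ^ M := by positivity
    have : 0 ≤ (c - 2 * (a * 2 ^ M)) * (a * 2 ^ M - c) / (a * 2 ^ M) :=
      div_nonneg (by nlinarith) hy.le
    rw [← sub_nonneg]
    calc (0 : ℝ) ≤ _ := this
      _ = _ := by field_simp; ring

end LacunarySums

theorem sum_hitOnceProb_le {L n s : ℕ} (hn : n = 2 ^ L) (hsn : s ≤ n) :
    ∑ i ∈ range L, hitOnceProb n (2 ^ (i + 1)) s ≤ 9 := by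
  rcases Nat.eq_zero_or_pos s with rfl | hs
  · simp [hitOnceProb]
  have hnR : (0 : ℝ) < n := by rw [hn]; positivity
  calc ∑ i ∈ range L, hitOnceProb n (2 ^ (i + 1)) s
      ≤ ∑ i ∈ range L, min (2 * (s : ℝ) / n * 2 ^ i) (3 ^ 2 / (2 * s / n * 2 ^ i)) := by
        refine sum_le_sum fun i hi => ?_
        have hk : 2 ≤ 2 ^ (i + 1) := Nat.le_self_pow (by omega) 2
        have hkn : 2 ^ (i + 1) ≤ n := hn ▸ Nat.pow_le_pow_right two_pos (mem_range.1 hi)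
        have hx : 2 * (s : ℝ) / n * 2 ^ i = s * (2 ^ (i + 1) : ℕ) / n := by push_cast; ring
        rw [hx]
        exact hitOnceProb_le_min hk hkn hs hsn
    _ ≤ 3 * 3 := sum_min_mul_two_pow_le (by positivity) three_pos _
    _ = 9 := by norm_num

theorem sum_prod_hitOnceProb_le {L n s : ℕ} (hn : n = 2 ^ L) (hsn : s ≤ n) :
    ∑ v : Fin L × Fin n, hitOnceProb n (2 ^ ((v.1 : ℕ) + 1)) s ≤ 9 * n := by
  rw [Fintype.sum_prod_type]
  simp only [sum_const, card_univ, Fintype.card_fin, nsmul_eq_mul]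
  rw [← mul_sum, Fin.sum_univ_eq_sum_range (fun i => hitOnceProb n (2 ^ (i + 1)) s), mul_comm]
  gcongr
  exact sum_hitOnceProb_le hn hsn

theorem two_pow_mul_pi_le_prod_one_add {ι : Type*} [Fintype ι] {Ω : ι → Type*}
    [∀ v, MeasurableSpace (Ω v)] (μ : ∀ v, Measure (Ω v))
    [∀ v, IsProbabilityMeasure (μ v)] (P : ∀ v, Ω v → Prop) [∀ v, DecidablePred (P v)]
    (hP : ∀ v, MeasurableSet {x | P v x}) (t : ℕ) :
    2 ^ t * Measure.pi μ {ω | t ≤ #{v | P v (ω v)}} ≤ ∏ v, (1 + μ v {x | P v x}) := by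
  set f : ∀ v, Ω v → ℝ≥0∞ := fun v => 1 + {x | P v x}.indicator 1
  have hf : ∀ v, Measurable (f v) := fun v =>
    measurable_const.add (measurable_one.indicator (hP v))
  have hprod : ∀ ω : ∀ v, Ω v, (2 : ℝ≥0∞) ^ #{v | P v (ω v)} = ∏ v, f v (ω v) := by
    intro ω
    rw [card_filter, ← prod_pow_eq_pow_sum]
    refine prod_congr rfl fun v _ => ?_
    by_cases h : P v (ω v) <;> simp [f, h, one_add_one_eq_two]
  calc 2 ^ t * Measure.pi μ {ω | t ≤ #{v | P v (ω v)}}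
      ≤ 2 ^ t * Measure.pi μ {ω | (2 : ℝ≥0∞) ^ t ≤ ∏ v, f v (ω v)} := by
        gcongr with ω
        intro hω
        rw [← hprod]
        exact pow_le_pow_right₀ one_le_two hω
    _ ≤ ∫⁻ ω, ∏ v, f v (ω v) ∂Measure.pi μ :=
        mul_meas_ge_le_lintegral₀ (Finset.measurable_prod _ fun v _ =>
          (hf v).comp (measurable_pi_apply v)).aemeasurable _
    _ = ∏ v, ∫⁻ x, f v x ∂μ v := by
        rw [ProbabilityTheory.lintegral_prod_eq_prod_lintegral_of_indepFun _ _
          (ProbabilityTheory.iIndepFun_pi fun v => (hf v).aemeasurable)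
          fun v => (hf v).comp (measurable_pi_apply v)]
        exact prod_congr rfl fun v _ => (measurePreserving_eval μ v).lintegral_comp (hf v)
    _ = ∏ v, (1 + μ v {x | P v x}) := by
        refine prod_congr rfl fun v _ => ?_
        simp only [f, Pi.add_apply, Pi.one_apply]
        rw [lintegral_add_left measurable_const, lintegral_const, measure_univ, one_mul,
          lintegral_indicator_one (hP v)]

theorem prod_one_add_le_ofReal_exp_sum {ι : Type*} (s : Finset ι) {p : ι → ℝ≥0∞}
    {F : ι → ℝ} (hF : ∀ i, 0 ≤ F i) (hp : ∀ i, p i ≤ ENNReal.ofReal (F i)) :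
    ∏ i ∈ s, (1 + p i) ≤ ENNReal.ofReal (exp (∑ i ∈ s, F i)) :=
  calc ∏ i ∈ s, (1 + p i) ≤ ∏ i ∈ s, ENNReal.ofReal (exp (F i)) := by
        refine prod_le_prod' fun i _ => ?_
        calc 1 + p i ≤ ENNReal.ofReal (1 + F i) := by
              rw [ENNReal.ofReal_add zero_le_one (hF i), ENNReal.ofReal_one]
              gcongr
              exact hp i
          _ ≤ ENNReal.ofReal (exp (F i)) := by
              gcongr
              linarith [add_one_le_exp (F i)]
    _ = ENNReal.ofReal (exp (∑ i ∈ s, F i)) := by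
        rw [exp_sum, ENNReal.ofReal_prod_of_nonneg fun i _ => (exp_pos _).le]

theorem uniformOfFinset_powersetCard_card_inter_eq_one_le {n k : ℕ}
    [MeasurableSpace (Finset (Fin n))] [MeasurableSingletonClass (Finset (Fin n))]
    (hne : (univ.powersetCard k).Nonempty) (S : Finset (Fin n)) :
    (PMF.uniformOfFinset _ hne).toMeasure {A | #(A ∩ S) = 1}
      ≤ ENNReal.ofReal (hitOnceProb n k #S) := by
  have hkn : k ≤ n := by simpa using powersetCard_nonempty.1 hne
  have hC : (0 : ℝ) < n.choose k := by exact_mod_cast Nat.choose_pos hkn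
  rw [PMF.toMeasure_uniformOfFinset_apply hne _ (Set.toFinite _).measurableSet,
    card_powersetCard, card_univ, Fintype.card_fin, hitOnceProb, ENNReal.ofReal_div_of_pos hC,
    ← Nat.cast_mul, ENNReal.ofReal_natCast, ENNReal.ofReal_natCast]
  gcongr
  simpa using card_filter_card_inter_eq_one_le S k

theorem two_pow_mul_measure_card_inter_eq_one_ge_le {ι : Type*} [Fintype ι] {n : ℕ}
    [MeasurableSpace (Finset (Fin n))] [MeasurableSingletonClass (Finset (Fin n))]
    (k : ι → ℕ) (hne : ∀ v, (univ.powersetCard (k v)).Nonempty) (S : Finset (Fin n))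
    (t : ℕ) :
    2 ^ t * Measure.pi (fun v => (PMF.uniformOfFinset _ (hne v)).toMeasure)
        {N | t ≤ #{v | #(N v ∩ S) = 1}}
      ≤ ENNReal.ofReal (exp (∑ v, hitOnceProb n (k v) #S)) :=
  (two_pow_mul_pi_le_prod_one_add _ (fun _ A => #(A ∩ S) = 1)
    (fun _ => (Set.toFinite _).measurableSet) t).trans
    (prod_one_add_le_ofReal_exp_sum _ (fun _ => hitOnceProb_nonneg _ _ _)
      fun v => uniformOfFinset_powersetCard_card_inter_eq_one_le (hne v) S)

theorem two_pow_mul_ofReal_exp_le (n : ℕ) :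
    2 ^ n * ENNReal.ofReal (exp (9 * n))
      ≤ 2 ^ (20 * n + 1) * ENNReal.ofReal (exp (-(2 * n))) := by
  have h11 : exp 11 ≤ 2 ^ 19 :=
    calc exp 11 = exp 1 ^ 11 := by rw [← exp_nat_mul]; norm_num
      _ ≤ 3 ^ 11 := by gcongr; linarith [exp_one_lt_d9]
      _ ≤ 2 ^ 19 := by norm_num
  have key : (2 : ℝ) ^ n * exp (9 * n) ≤ 2 ^ (20 * n + 1) * exp (-(2 * n)) :=
    calc (2 : ℝ) ^ n * exp (9 * n) = 2 ^ n * exp 11 ^ n * exp (-(2 * n)) := by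
          rw [← exp_nat_mul, mul_assoc, ← exp_add]; ring_nf
      _ ≤ 2 ^ n * (2 ^ 19) ^ n * exp (-(2 * n)) := by gcongr
      _ ≤ 2 ^ (20 * n + 1) * exp (-(2 * n)) := by
          rw [← pow_mul, ← pow_add]
          gcongr (2 : ℝ) ^ ?_ * _
          · norm_num
          · omega
  have hpow : ∀ m : ℕ, (2 : ℝ≥0∞) ^ m = ENNReal.ofReal (2 ^ m) := fun m => by
    rw [ENNReal.ofReal_pow zero_le_two, ENNReal.ofReal_ofNat]
  rw [hpow, hpow, ← ENNReal.ofReal_mul (by positivity), ← ENNReal.ofReal_mul (by positivity)]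
  exact ENNReal.ofReal_le_ofReal key

theorem stmt_12_general (L : ℕ) (n' : ℕ) (hn' : n' = 2 ^ L)
    (hne : ∀ i : Fin L,
      ((Finset.univ : Finset (Fin n')).powersetCard (2 ^ ((i : ℕ) + 1))).Nonempty) :
    letI : MeasurableSpace (Finset (Fin n')) := ⊤
    1 - ENNReal.ofReal (Real.exp (-(2 * (n' : ℝ))))
      ≤ (Measure.pi fun v : Fin L × Fin n' =>
            (PMF.uniformOfFinset _ (hne v.1)).toMeasure)
          {N : Fin L × Fin n' → Finset (Fin n') |
            ∀ S' : Finset (Fin n'),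
              (Finset.univ.filter
                  (fun v : Fin L × Fin n' => ((N v) ∩ S').card = 1)).card ≤ 20 * n'} := by
  let : MeasurableSpace (Finset (Fin n')) := ⊤
  have : MeasurableSingletonClass (Finset (Fin n')) := ⟨fun _ => trivial⟩
  set μ := Measure.pi fun v : Fin L × Fin n' => (PMF.uniformOfFinset _ (hne v.1)).toMeasure
  set G := {N : Fin L × Fin n' → Finset (Fin n') |
    ∀ S' : Finset (Fin n'), #{v | #(N v ∩ S') = 1} ≤ 20 * n'}
  set bad := fun S' : Finset (Fin n') =>
    {N : Fin L × Fin n' → Finset (Fin n') | 20 * n' + 1 ≤ #{v | #(N v ∩ S') = 1}}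
  have hbad : ∀ S', 2 ^ (20 * n' + 1) * μ (bad S') ≤ ENNReal.ofReal (exp (9 * n')) := fun S' =>
    (two_pow_mul_measure_card_inter_eq_one_ge_le (fun v : Fin L × Fin n' => 2 ^ ((v.1 : ℕ) + 1))
      (fun v => hne v.1) S' _).trans <|
      ENNReal.ofReal_le_ofReal <| exp_le_exp.2 <|
        sum_prod_hitOnceProb_le hn' ((card_le_univ S').trans_eq (Fintype.card_fin _))
  have hGc : Gᶜ ⊆ ⋃ S', bad S' := fun N hN => by
    simp only [G, Set.mem_compl_iff, Set.mem_ofPred_eq, not_forall, not_le] at hN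
    exact Set.mem_iUnion.2 hN
  have hμGc : μ Gᶜ ≤ ENNReal.ofReal (exp (-(2 * n'))) := by
    refine (ENNReal.mul_le_mul_iff_right (pow_ne_zero (20 * n' + 1) two_ne_zero)
      (ENNReal.pow_ne_top ENNReal.ofNat_ne_top)).1 ?_
    calc 2 ^ (20 * n' + 1) * μ Gᶜ ≤ ∑ S', 2 ^ (20 * n' + 1) * μ (bad S') := by
          rw [← mul_sum]
          gcongr
          exact (measure_mono hGc).trans (measure_iUnion_fintype_le _ _)
      _ ≤ 2 ^ n' * ENNReal.ofReal (exp (9 * n')) := by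
          refine (sum_le_sum fun S' _ => hbad S').trans_eq ?_
          rw [sum_const, card_univ, Fintype.card_finset, Fintype.card_fin, nsmul_eq_mul]
          norm_cast
      _ ≤ 2 ^ (20 * n' + 1) * ENNReal.ofReal (exp (-(2 * n'))) := two_pow_mul_ofReal_exp_le n'
  rw [← compl_compl G, prob_compl_eq_one_sub (Set.toFinite _).measurableSet]
  exact tsub_le_tsub_left hμGc 1

/-- Let `L` be a positive integer and `n' = 2^L`. In the random bipartite graph with sender
set `Fin n'` and receiver set `Fin L × Fin n'` (class `i : Fin L`, i.e. class `R_{i+1}`,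
has size `n'`), where independently each receiver in class `R_{i+1}` gets a uniformly random
`2^(i+1)`-element subset of `Fin n'` as its neighborhood, with probability at least
`1 - exp (-2 * n')` the graph has the property that for every `S' ⊆ Fin n'` the number of
receivers `v` with `|N(v) ∩ S'| = 1` is at most `20 * n'`. -/
theorem stmt_12 (L : ℕ) (hL : 0 < L) (n' : ℕ) (hn' : n' = 2 ^ L)
    (hne : ∀ i : Fin L,
      ((Finset.univ : Finset (Fin n')).powersetCard (2 ^ ((i : ℕ) + 1))).Nonempty) :
    letI : MeasurableSpace (Finset (Fin n')) := ⊤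
    1 - ENNReal.ofReal (Real.exp (-(2 * (n' : ℝ))))
      ≤ (Measure.pi fun v : Fin L × Fin n' =>
            (PMF.uniformOfFinset _ (hne v.1)).toMeasure)
          {N : Fin L × Fin n' → Finset (Fin n') |
            ∀ S' : Finset (Fin n'),
              (Finset.univ.filter
                  (fun v : Fin L × Fin n' => ((N v) ∩ S').card = 1)).card ≤ 20 * n'} :=
  stmt_12_general L n' hn' hne
end
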